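/- arXiv:2211.05475 — 5 statements merged into one kernel-verified Lean document; each statement's English description precedes it below -/
import Mathlib

section
/- For a tree T on vertex set [n], every edge ordering ω of T yields a product π_ω of the n-1 transpositions associated to the edges that is a cyclic permutation of length n (Dénes' theorem, one direction). -/
/-- The transposition `(i j) ∈ S_n` associated to an edge `{i, j}` of a graph on `[n]`. -/
def tau {n : ℕ} (e : Sym2 (Fin n)) : Equiv.Perm (Fin n) :=
  Sym2.lift ⟨fun i j => Equiv.swap i j, fun i j => Equiv.swap_comm i j⟩ e

/-- `π` is a full cyclic permutation (a cyclic permutation of length `n`) of `S_n`: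
the cyclic group it generates acts transitively on `[n]`. -/
def IsFullCycle {n : ℕ} (π : Equiv.Perm (Fin n)) : Prop :=
  ∀ i j : Fin n, ∃ k : ℕ, (π ^ k) i = j

namespace DenesAux

variable {n : ℕ}

/-- Same orbit under the cyclic group generated by `π`. -/
def Same (π : Equiv.Perm (Fin n)) (i j : Fin n) : Prop := ∃ k : ℕ, (π ^ k) i = j

lemma same_refl (π : Equiv.Perm (Fin n)) (i : Fin n) : Same π i i := ⟨0, rfl⟩

lemma same_apply (π : Equiv.Perm (Fin n)) (i : Fin n) : Same π i (π i) := ⟨1, by simp⟩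

lemma same_trans {π : Equiv.Perm (Fin n)} {i j l : Fin n}
    (h1 : Same π i j) (h2 : Same π j l) : Same π i l := by
  obtain ⟨k, rfl⟩ := h1
  obtain ⟨m, rfl⟩ := h2
  exact ⟨m + k, by rw [pow_add]; rfl⟩

lemma same_symm {π : Equiv.Perm (Fin n)} {i j : Fin n} (h : Same π i j) : Same π j i := by
  obtain ⟨k, rfl⟩ := h
  refine ⟨k * (orderOf π - 1), ?_⟩
  have hpos : 0 < orderOf π := orderOf_pos π
  obtain ⟨m, hm⟩ : ∃ m, orderOf π = m + 1 := ⟨orderOf π - 1, by omega⟩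
  have hkey : (π ^ (k * (orderOf π - 1)) * π ^ k) = 1 := by
    rw [← pow_add, hm]
    have : k * (m + 1 - 1) + k = orderOf π * k := by rw [hm]; simp only [Nat.add_sub_cancel]; ring
    rw [this, pow_mul, pow_orderOf_eq_one, one_pow]
  calc (π ^ (k * (orderOf π - 1))) ((π ^ k) i)
      = (π ^ (k * (orderOf π - 1)) * π ^ k) i := rfl
    _ = i := by rw [hkey]; rfl

lemma tau_mk (a b : Fin n) : tau s(a, b) = Equiv.swap a b := rfl

/-- The product of transpositions along a list of edges. -/
def pL (L : List (Sym2 (Fin n))) : Equiv.Perm (Fin n) := (L.map tau).reverse.prod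

lemma pL_nil : pL ([] : List (Sym2 (Fin n))) = 1 := rfl

lemma pL_append (L : List (Sym2 (Fin n))) (e : Sym2 (Fin n)) :
    pL (L ++ [e]) = tau e * pL L := by
  simp [pL]

/-- Key merging lemma: if `a` and `b` are in different `π`-orbits, then `a` and `b`
are in the same orbit of `swap a b * π`. -/
lemma same_swap_mul {π : Equiv.Perm (Fin n)} {a b : Fin n} (hab : ¬ Same π a b) :
    Same (Equiv.swap a b * π) a b := by
  have hne : a ≠ b := fun h => hab (h ▸ same_refl π a)
  set σ := Equiv.swap a b * π with hσ
  have hb : ∀ k : ℕ, (π ^ k) a ≠ b := fun k h => hab ⟨k, h⟩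
  set p := Function.minimalPeriod π a with hp
  have hper : Function.IsPeriodicPt π (orderOf π) a := by
    show (⇑π)^[orderOf π] a = a
    rw [Equiv.Perm.iterate_eq_pow, pow_orderOf_eq_one]; rfl
  have hppos : 0 < p := hper.minimalPeriod_pos (orderOf_pos π)
  have hstep : ∀ k, k < p → (σ ^ k) a = (π ^ k) a := by
    intro k
    induction k with
    | zero => intro _; rfl
    | succ k ih =>
      intro hk
      have hk' : k < p := by omega
      have h1 : (σ ^ (k + 1)) a = σ ((σ ^ k) a) := by
        rw [pow_succ' σ k]; rfl
      rw [h1, ih hk']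
      have h2 : σ ((π ^ k) a) = Equiv.swap a b (π ((π ^ k) a)) := rfl
      have h3 : π ((π ^ k) a) = (π ^ (k + 1)) a := by
        rw [pow_succ' π k]; rfl
      rw [h2, h3]
      have hna : (π ^ (k + 1)) a ≠ a := by
        have := Function.not_isPeriodicPt_of_pos_of_lt_minimalPeriod
          (Nat.succ_ne_zero k) (by omega : k + 1 < p) (f := ⇑π) (x := a)
        intro h
        exact this (by show (⇑π)^[k+1] a = a; rw [Equiv.Perm.iterate_eq_pow]; exact h)
      exact Equiv.swap_apply_of_ne_of_ne hna (hb (k + 1))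
  refine ⟨p, ?_⟩
  obtain ⟨q, hq⟩ : ∃ q, p = q + 1 := ⟨p - 1, by omega⟩
  have h1 : (σ ^ p) a = σ ((σ ^ q) a) := by
    rw [hq, pow_succ' σ q]; rfl
  rw [h1, hstep q (by omega)]
  have h2 : σ ((π ^ q) a) = Equiv.swap a b (π ((π ^ q) a)) := rfl
  have h3 : π ((π ^ q) a) = (π ^ p) a := by
    rw [hq, pow_succ' π q]; rfl
  have h4 : (π ^ p) a = a := by
    have := Function.isPeriodicPt_minimalPeriod (⇑π) a
    have h5 : (⇑π)^[p] a = a := this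
    rwa [Equiv.Perm.iterate_eq_pow] at h5
  rw [h2, h3, h4, Equiv.swap_apply_left]

/-- Orbit preservation: if `a, b` are in the same orbit of `σ = swap a b * π`, then
every `π`-orbit relation is preserved in `σ`. -/
lemma same_preserve {π : Equiv.Perm (Fin n)} {a b : Fin n}
    (hab : Same (Equiv.swap a b * π) a b) {i j : Fin n} (h : Same π i j) :
    Same (Equiv.swap a b * π) i j := by
  set σ := Equiv.swap a b * π with hσ
  have key : ∀ x : Fin n, Same σ x (π x) := by
    intro x
    have h1 : σ x = Equiv.swap a b (π x) := rfl
    by_cases hxa : π x = a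
    · have h2 : σ x = b := by rw [h1, hxa, Equiv.swap_apply_left]
      have h3 : Same σ x b := ⟨1, by simpa using h2⟩
      rw [hxa]
      exact same_trans h3 (same_symm hab)
    · by_cases hxb : π x = b
      · have h2 : σ x = a := by rw [h1, hxb, Equiv.swap_apply_right]
        have h3 : Same σ x a := ⟨1, by simpa using h2⟩
        rw [hxb]
        exact same_trans h3 hab
      · have h2 : σ x = π x := by rw [h1, Equiv.swap_apply_of_ne_of_ne hxa hxb]
        exact ⟨1, by simpa using h2⟩
  obtain ⟨k, rfl⟩ := h
  induction k with
  | zero => exact same_refl σ i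
  | succ k ih =>
    have h3 : (π ^ (k + 1)) i = π ((π ^ k) i) := by rw [pow_succ' π k]; rfl
    rw [h3]
    exact same_trans ih (key _)

/-- Easy direction, pointwise: applying the product moves within components. -/
lemma reach_apply (L : List (Sym2 (Fin n))) (i : Fin n) :
    (SimpleGraph.fromEdgeSet {e | e ∈ L}).Reachable i (pL L i) := by
  induction L using List.reverseRecOn generalizing i with
  | nil => rw [pL_nil]; rfl
  | append_singleton L e ih =>
    have hle : SimpleGraph.fromEdgeSet {e' | e' ∈ L} ≤
        SimpleGraph.fromEdgeSet {e' | e' ∈ L ++ [e]} := by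
      apply SimpleGraph.fromEdgeSet_mono
      intro x hx
      simp only [Set.mem_setOf_eq, List.mem_append] at *
      exact Or.inl hx
    have h1 : (SimpleGraph.fromEdgeSet {e' | e' ∈ L ++ [e]}).Reachable i (pL L i) :=
      (ih i).mono hle
    refine h1.trans ?_
    rw [pL_append]
    induction e using Sym2.ind with
    | _ a b =>
      rw [tau_mk]
      show (SimpleGraph.fromEdgeSet {e' | e' ∈ L ++ [s(a,b)]}).Reachable
        (pL L i) (Equiv.swap a b (pL L i))
      set y := pL L i
      by_cases hab : a = b
      · subst hab; rw [Equiv.swap_self]; rfl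
      · have hadj : (SimpleGraph.fromEdgeSet {e' | e' ∈ L ++ [s(a,b)]}).Adj a b := by
          rw [SimpleGraph.fromEdgeSet_adj]
          exact ⟨by simp, hab⟩
        by_cases hya : y = a
        · rw [hya, Equiv.swap_apply_left]; exact hadj.reachable
        · by_cases hyb : y = b
          · rw [hyb, Equiv.swap_apply_right]; exact hadj.symm.reachable
          · rw [Equiv.swap_apply_of_ne_of_ne hya hyb]

/-- Easy direction: same orbit implies reachable. -/
lemma same_reach (L : List (Sym2 (Fin n))) {i j : Fin n} (h : Same (pL L) i j) :
    (SimpleGraph.fromEdgeSet {e | e ∈ L}).Reachable i j := by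
  obtain ⟨k, rfl⟩ := h
  induction k with
  | zero => rfl
  | succ k ih =>
    have h3 : ((pL L) ^ (k + 1)) i = (pL L) (((pL L) ^ k) i) := by
      rw [pow_succ' (pL L) k]; rfl
    rw [h3]
    exact ih.trans (reach_apply L _)

lemma isAcyclic_mono {G H : SimpleGraph (Fin n)} (hle : H ≤ G) (hG : G.IsAcyclic) :
    H.IsAcyclic := fun _ c hc => hG (c.mapLe hle) (hc.mapLe hle)

/-- Hard direction: reachable implies same orbit, for acyclic edge lists. -/
lemma reach_same (L : List (Sym2 (Fin n))) (hnd : L.Nodup)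
    (hac : (SimpleGraph.fromEdgeSet {e | e ∈ L}).IsAcyclic) (i j : Fin n)
    (h : (SimpleGraph.fromEdgeSet {e | e ∈ L}).Reachable i j) : Same (pL L) i j := by
  induction L using List.reverseRecOn generalizing i j with
  | nil =>
    have : (SimpleGraph.fromEdgeSet {e | e ∈ ([] : List (Sym2 (Fin n)))}) = ⊥ := by
      have : ({e | e ∈ ([] : List (Sym2 (Fin n)))} : Set (Sym2 (Fin n))) = ∅ := by simp
      rw [this, SimpleGraph.fromEdgeSet_empty]
    rw [this, SimpleGraph.reachable_bot] at h
    exact h ▸ same_refl _ i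
  | append_singleton L e0 ih =>
    induction e0 using Sym2.ind with
    | _ a b =>
      set HL := SimpleGraph.fromEdgeSet {e | e ∈ L ++ [s(a,b)]} with hHL
      set H' := SimpleGraph.fromEdgeSet {e | e ∈ L} with hH'
      have hle : H' ≤ HL := by
        apply SimpleGraph.fromEdgeSet_mono
        intro x hx
        simp only [Set.mem_setOf_eq, List.mem_append] at *
        exact Or.inl hx
      have hnd' : L.Nodup := (List.nodup_append.mp hnd).1
      have hnotmem : s(a,b) ∉ L := by
        have := List.nodup_append'.mp hnd
        intro hm
        exact this.2.2 hm (List.mem_singleton_self _)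
      have hac' : H'.IsAcyclic := isAcyclic_mono hle hac
      rw [pL_append, tau_mk]
      set π := pL L with hπ
      set σ := Equiv.swap a b * π with hσ
      -- preservation of old orbits
      have hpres : ∀ x y : Fin n, Same π x y → Same σ x y := by
        by_cases hab : a = b
        · intro x y hxy
          have : σ = π := by rw [hσ, hab, Equiv.swap_self]; ext z; rfl
          rw [this]; exact hxy
        · -- a ≠ b: derive ¬ Same π a b from acyclicity (bridge)
          have hadj : HL.Adj a b := by
            rw [hHL, SimpleGraph.fromEdgeSet_adj]
            exact ⟨by simp, hab⟩
          have hbridge := (SimpleGraph.isAcyclic_iff_forall_edge_isBridge.mp hac)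
            ((SimpleGraph.mem_edgeSet _).mpr hadj)
          rw [SimpleGraph.isBridge_iff] at hbridge
          have hle2 : H' ≤ HL \ SimpleGraph.fromEdgeSet {s(a,b)} := by
            intro x y hxy
            rw [SimpleGraph.sdiff_adj]
            refine ⟨hle hxy, ?_⟩
            rw [SimpleGraph.fromEdgeSet_adj]
            rintro ⟨hm, -⟩
            rw [hH', SimpleGraph.fromEdgeSet_adj] at hxy
            have : s(x,y) ∈ L := hxy.1
            rw [Set.mem_singleton_iff] at hm
            exact hnotmem (hm ▸ this)
          have hnr : ¬ H'.Reachable a b := fun hr => hbridge (hr.mono hle2)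
          have hns : ¬ Same π a b := fun hs => hnr (same_reach L hs)
          exact fun x y hxy => same_preserve (same_swap_mul hns) hxy
      have hσab : Same σ a b := by
        by_cases hab : a = b
        · exact hab ▸ same_refl σ a
        · have hadj : HL.Adj a b := by
            rw [hHL, SimpleGraph.fromEdgeSet_adj]
            exact ⟨by simp, hab⟩
          have hbridge := (SimpleGraph.isAcyclic_iff_forall_edge_isBridge.mp hac)
            ((SimpleGraph.mem_edgeSet _).mpr hadj)
          rw [SimpleGraph.isBridge_iff] at hbridge
          have hle2 : H' ≤ HL \ SimpleGraph.fromEdgeSet {s(a,b)} := by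
            intro x y hxy
            rw [SimpleGraph.sdiff_adj]
            refine ⟨hle hxy, ?_⟩
            rw [SimpleGraph.fromEdgeSet_adj]
            rintro ⟨hm, -⟩
            rw [hH', SimpleGraph.fromEdgeSet_adj] at hxy
            have : s(x,y) ∈ L := hxy.1
            rw [Set.mem_singleton_iff] at hm
            exact hnotmem (hm ▸ this)
          have hnr : ¬ H'.Reachable a b := fun hr => hbridge (hr.mono hle2)
          have hns : ¬ Same π a b := fun hs => hnr (same_reach L hs)
          exact same_swap_mul hns
      -- now induct on the walk
      obtain ⟨w⟩ := h
      induction w with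
      | nil => exact same_refl σ _
      | cons hxy p ihw =>
        rename_i x y z
        refine same_trans ?_ ihw
        have hxy' := hxy
        rw [hHL, SimpleGraph.fromEdgeSet_adj] at hxy'
        obtain ⟨hm, hne⟩ := hxy'
        rw [Set.mem_setOf_eq, List.mem_append, List.mem_singleton] at hm
        rcases hm with hm | hm
        · have hadj' : H'.Adj x y := by
            rw [hH', SimpleGraph.fromEdgeSet_adj]
            exact ⟨hm, hne⟩
          exact hpres x y (ih hnd' hac' x y hadj'.reachable)
        · rw [Sym2.eq_iff] at hm
          rcases hm with ⟨rfl, rfl⟩ | ⟨rfl, rfl⟩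
          · exact hσab
          · exact same_symm hσab

end DenesAux

/-- Dénes' theorem (one direction): for a tree `T` on `[n]`, every edge ordering
`ω = (e₁, ..., e_{n-1})` of `T` yields a product `π_ω = τ_{e_{n-1}} ⋯ τ_{e_1}` which is a
cyclic permutation of length `n`. -/
theorem stmt6 (n : ℕ) (hn : 1 ≤ n) (G : SimpleGraph (Fin n)) (hT : G.IsTree)
    (ω : List (Sym2 (Fin n))) (hnd : ω.Nodup) (hmem : ∀ e, e ∈ ω ↔ e ∈ G.edgeSet) :
    IsFullCycle ((ω.map tau).reverse.prod) := by
  intro i j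
  have hset : ({e | e ∈ ω} : Set (Sym2 (Fin n))) = G.edgeSet := Set.ext hmem
  have hG : SimpleGraph.fromEdgeSet {e | e ∈ ω} = G := by
    rw [hset, SimpleGraph.fromEdgeSet_edgeSet]
  have hac : (SimpleGraph.fromEdgeSet {e | e ∈ ω}).IsAcyclic := hG ▸ hT.IsAcyclic
  have hr : (SimpleGraph.fromEdgeSet {e | e ∈ ω}).Reachable i j := by
    rw [hG]; exact hT.isConnected.preconnected i j
  exact DenesAux.reach_same ω hnd hac i j hr
end

section
/- If every edge ordering of a connected graph G on vertex set [n] yields a product that is a full n-cycle in S_n, then G is a tree. -/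
open Equiv Equiv.Perm

variable {n : ℕ}

lemma tau_mk (u w : Fin n) : tau s(u, w) = Equiv.swap u w := rfl

def prodOf (ω : List (Sym2 (Fin n))) : Equiv.Perm (Fin n) := (ω.map tau).reverse.prod

lemma prodOf_append_singleton (ω : List (Sym2 (Fin n))) (e : Sym2 (Fin n)) :
    prodOf (ω ++ [e]) = tau e * prodOf ω := by
  simp [prodOf]

lemma prodOf_cons (e : Sym2 (Fin n)) (ω : List (Sym2 (Fin n))) :
    prodOf (e :: ω) = prodOf ω * tau e := by
  simp [prodOf]

def DInv (F : Set (Sym2 (Fin n))) (S : Finset (Fin n)) : Prop :=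
  ∀ ω : List (Sym2 (Fin n)), ω.Nodup → (∀ e, e ∈ ω ↔ e ∈ F) →
    (∀ x, ∃ v ∈ S, (prodOf ω).SameCycle x v) ∧
    (∀ v₁ ∈ S, ∀ v₂ ∈ S, v₁ ≠ v₂ → ¬ (prodOf ω).SameCycle v₁ v₂)

lemma dinv_congr {F F' : Set (Sym2 (Fin n))} {S : Finset (Fin n)}
    (hFF : ∀ e, e ∈ F ↔ e ∈ F') (h : DInv F S) : DInv F' S :=
  fun ω hn hm => h ω hn (fun e => (hm e).trans (hFF e).symm)



lemma sc_mul_swap_left {σ : Equiv.Perm (Fin n)} (u w : Fin n) {x y : Fin n}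
    (hxy : σ.SameCycle x y) :
    (Equiv.swap u w * σ).SameCycle x y ∨ (Equiv.swap u w * σ).SameCycle x u ∨
      (Equiv.swap u w * σ).SameCycle x w := by
  classical
  obtain ⟨m, -, hm⟩ := hxy.exists_pow_eq'
  clear hxy
  induction m generalizing x with
  | zero =>
    simp only [pow_zero, Perm.one_apply] at hm
    subst hm
    exact Or.inl (SameCycle.refl _ _)
  | succ m ih =>
    by_cases h1 : σ x = u
    · refine Or.inr (Or.inr ⟨1, ?_⟩)
      simp [Perm.mul_apply, h1]
    by_cases h2 : σ x = w
    · refine Or.inr (Or.inl ⟨1, ?_⟩)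
      simp [Perm.mul_apply, h2]
    · have hstep : (Equiv.swap u w * σ).SameCycle x (σ x) := by
        refine ⟨1, ?_⟩
        simp [Perm.mul_apply, Equiv.swap_apply_of_ne_of_ne h1 h2]
      have hm' : (σ ^ m) (σ x) = y := by
        rw [← Perm.mul_apply, ← pow_succ]
        exact hm
      rcases ih hm' with h | h | h
      · exact Or.inl (hstep.trans h)
      · exact Or.inr (Or.inl (hstep.trans h))
      · exact Or.inr (Or.inr (hstep.trans h))

lemma not_sc_swap_mul_of_sc {σ : Equiv.Perm (Fin n)} {u w : Fin n} (hne : u ≠ w)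
    (h : σ.SameCycle u w) : ¬ (Equiv.swap u w * σ).SameCycle u w := by
  classical
  obtain ⟨m0, -, hm0⟩ := h.exists_pow_eq'
  have hm0pos : 0 < m0 := by
    rcases Nat.eq_zero_or_pos m0 with rfl | h'
    · simp only [pow_zero, Perm.one_apply] at hm0; exact absurd hm0 hne
    · exact h'
  have hP : ∃ d, 0 < d ∧ (σ ^ d) u = w := ⟨m0, hm0pos, hm0⟩
  set d := Nat.find hP with hd
  obtain ⟨hdpos, hdw⟩ := Nat.find_spec hP
  have hmin : ∀ i, 0 < i → i < d → (σ ^ i) u ≠ w := by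
    intro i hi hid hiw
    exact Nat.find_min hP hid ⟨hi, hiw⟩
  have hne_u : ∀ i, 0 < i → i < d → (σ ^ i) u ≠ u := by
    intro i hi hid hiu
    have heq : (σ ^ d) u = (σ ^ (d - i)) u := by
      have h1 : d = (d - i) + i := by omega
      calc (σ ^ d) u = (σ ^ ((d - i) + i)) u := by rw [← h1]
        _ = (σ ^ (d - i)) ((σ ^ i) u) := by rw [pow_add]; rfl
        _ = (σ ^ (d - i)) u := by rw [hiu]
    exact hmin (d - i) (by omega) (by omega) (heq ▸ hdw)
  set ρ := Equiv.swap u w * σ with hρ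
  have claim : ∀ j, j ≤ d - 1 → (ρ ^ j) u = (σ ^ j) u := by
    intro j hj
    induction j with
    | zero => simp
    | succ j ih =>
      have hj' : j ≤ d - 1 := by omega
      have h1 : (σ ^ (j + 1)) u ≠ u := hne_u _ (by omega) (by omega)
      have h2 : (σ ^ (j + 1)) u ≠ w := hmin _ (by omega) (by omega)
      have hσ : σ ((σ ^ j) u) = (σ ^ (j+1)) u := by
        rw [pow_succ', Perm.mul_apply]
      calc (ρ ^ (j+1)) u = ρ ((ρ ^ j) u) := by rw [pow_succ', Perm.mul_apply]
        _ = ρ ((σ ^ j) u) := by rw [ih hj']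
        _ = Equiv.swap u w (σ ((σ ^ j) u)) := by rw [hρ]; rfl
        _ = Equiv.swap u w ((σ ^ (j+1)) u) := by rw [hσ]
        _ = (σ ^ (j+1)) u := Equiv.swap_apply_of_ne_of_ne h1 h2
  have hd1 : d - 1 + 1 = d := by omega
  have hcyc : (ρ ^ d) u = u := by
    have h1 : (ρ ^ d) u = ρ ((ρ ^ (d-1)) u) := by
      conv_lhs => rw [← hd1]
      rw [pow_succ', Perm.mul_apply]
    rw [h1, claim (d-1) le_rfl]
    have hσ : σ ((σ ^ (d-1)) u) = (σ ^ d) u := by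
      conv_rhs => rw [← hd1]
      rw [pow_succ', Perm.mul_apply]
    show (Equiv.swap u w * σ) _ = u
    rw [Perm.mul_apply, hσ, hdw, Equiv.swap_apply_right]
  intro hcon
  obtain ⟨m, -, hm⟩ := hcon.exists_pow_eq'
  have hall : ∀ m, (ρ ^ m) u ≠ w := by
    intro m
    induction m using Nat.strong_induction_on with
    | _ m ih =>
      rcases lt_or_ge m d with hlt | hge
      · rw [claim m (by omega)]
        rcases Nat.eq_zero_or_pos m with rfl | hmp
        · simpa using hne
        · exact hmin m hmp hlt
      · have heq : (ρ ^ m) u = (ρ ^ (m - d)) u := by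
          have h1 : m = (m - d) + d := by omega
          calc (ρ ^ m) u = (ρ ^ ((m-d) + d)) u := by rw [← h1]
            _ = (ρ ^ (m-d)) ((ρ ^ d) u) := by rw [pow_add]; rfl
            _ = (ρ ^ (m-d)) u := by rw [hcyc]
        rw [heq]
        exact ih (m - d) (by omega)
  exact hall m hm

lemma sc_swap_mul_of_not_sc {σ : Equiv.Perm (Fin n)} {u w : Fin n}
    (h : ¬ σ.SameCycle u w) : (Equiv.swap u w * σ).SameCycle u w := by
  classical
  have hne : u ≠ w := by rintro rfl; exact h (SameCycle.refl σ u)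
  have hP : ∃ p, 0 < p ∧ (σ ^ p) u = u :=
    ⟨orderOf σ, orderOf_pos σ, by rw [pow_orderOf_eq_one]; rfl⟩
  set p := Nat.find hP with hp
  obtain ⟨hppos, hpu⟩ := Nat.find_spec hP
  have hmin_u : ∀ i, 0 < i → i < p → (σ ^ i) u ≠ u := by
    intro i hi hip hiu
    exact Nat.find_min hP hip ⟨hi, hiu⟩
  have hmin_w : ∀ i : ℕ, (σ ^ i) u ≠ w := by
    intro i hiw
    exact h ⟨(i : ℤ), by rw [zpow_natCast]; exact hiw⟩
  set ρ := Equiv.swap u w * σ with hρ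
  have claim : ∀ j, j ≤ p - 1 → (ρ ^ j) u = (σ ^ j) u := by
    intro j hj
    induction j with
    | zero => simp
    | succ j ih =>
      have hj' : j ≤ p - 1 := by omega
      have h1 : (σ ^ (j + 1)) u ≠ u := hmin_u _ (by omega) (by omega)
      have h2 : (σ ^ (j + 1)) u ≠ w := hmin_w _
      have hσ : σ ((σ ^ j) u) = (σ ^ (j+1)) u := by
        rw [pow_succ', Perm.mul_apply]
      calc (ρ ^ (j+1)) u = ρ ((ρ ^ j) u) := by rw [pow_succ', Perm.mul_apply]
        _ = ρ ((σ ^ j) u) := by rw [ih hj']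
        _ = Equiv.swap u w (σ ((σ ^ j) u)) := by rw [hρ]; rfl
        _ = Equiv.swap u w ((σ ^ (j+1)) u) := by rw [hσ]
        _ = (σ ^ (j+1)) u := Equiv.swap_apply_of_ne_of_ne h1 h2
  refine ⟨(p : ℤ), ?_⟩
  rw [zpow_natCast]
  have hp1 : p - 1 + 1 = p := by omega
  have h1 : (ρ ^ p) u = ρ ((ρ ^ (p-1)) u) := by
    conv_lhs => rw [← hp1]
    rw [pow_succ', Perm.mul_apply]
  rw [h1, claim (p-1) le_rfl]
  have hσ : σ ((σ ^ (p-1)) u) = (σ ^ p) u := by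
    conv_rhs => rw [← hp1]
    rw [pow_succ', Perm.mul_apply]
  show (Equiv.swap u w * σ) _ = w
  rw [Perm.mul_apply, hσ, hpu, Equiv.swap_apply_left]

lemma sc_conj {Q : Equiv.Perm (Fin n)} {u w x y : Fin n} :
    (Equiv.swap u w * Q * Equiv.swap u w).SameCycle x y ↔
      Q.SameCycle (Equiv.swap u w x) (Equiv.swap u w y) := by
  classical
  set τ := Equiv.swap u w with hτ
  have hinv : τ⁻¹ = τ := Equiv.swap_inv u w
  have key : ∀ i : ℤ, (τ * Q * τ) ^ i = τ * Q ^ i * τ := by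
    intro i
    have h0 : τ * Q * τ = τ * Q * τ⁻¹ := by rw [hinv]
    rw [h0, conj_zpow, hinv]
  constructor
  · rintro ⟨i, hi⟩
    refine ⟨i, ?_⟩
    rw [key] at hi
    have : τ ((Q ^ i) (τ x)) = y := hi
    have h2 := congrArg τ this
    rwa [Equiv.swap_apply_self] at h2
  · rintro ⟨i, hi⟩
    refine ⟨i, ?_⟩
    rw [key]
    show τ ((Q ^ i) (τ x)) = y
    rw [hi, Equiv.swap_apply_self]

lemma step {F : Set (Sym2 (Fin n))} {S : Finset (Fin n)} (hI : DInv F S)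
    {u w : Fin n} (hu : u ∈ S) (hw : w ∉ S) (he : s(u,w) ∈ F) :
    DInv (F \ {s(u,w)}) (insert w S) := by
  classical
  have hne : u ≠ w := fun h => hw (h ▸ hu)
  intro ω hnd hmem
  set τ := Equiv.swap u w with hτdef
  set π := prodOf ω with hπdef
  have henot : s(u,w) ∉ ω := fun hc => ((hmem _).1 hc).2 rfl
  -- ordering with the edge last
  have hmem1 : ∀ e, e ∈ ω ++ [s(u,w)] ↔ e ∈ F := by
    intro e
    simp only [List.mem_append, List.mem_singleton, hmem e]
    constructor
    · rintro (he' | rfl)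
      · exact he'.1
      · exact he
    · intro heF
      by_cases hcase : e = s(u,w)
      · exact Or.inr hcase
      · exact Or.inl ⟨heF, hcase⟩
  have hnd1 : (ω ++ [s(u,w)]).Nodup := by
    simp [List.nodup_append, hnd, henot]
    exact fun a ha hc => henot (hc ▸ ha)
  have h1 := hI (ω ++ [s(u,w)]) hnd1 hmem1
  rw [prodOf_append_singleton, tau_mk, ← hτdef, ← hπdef] at h1
  -- ordering with the edge first
  have hmem2 : ∀ e, e ∈ s(u,w) :: ω ↔ e ∈ F := by
    intro e
    simp only [List.mem_cons, hmem e]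
    constructor
    · rintro (rfl | he')
      · exact he
      · exact he'.1
    · intro heF
      by_cases hcase : e = s(u,w)
      · exact Or.inl hcase
      · exact Or.inr ⟨heF, hcase⟩
  have hnd2 : (s(u,w) :: ω).Nodup := by simp [hnd, henot]
  have h2 := hI (s(u,w) :: ω) hnd2 hmem2
  rw [prodOf_cons, tau_mk, ← hτdef, ← hπdef] at h2
  -- claim : u and w in the same cycle of τ * π
  have hττ : τ * τ = 1 := by rw [hτdef]; exact Equiv.swap_mul_self u w
  have hsc : (τ * π).SameCycle u w := by
    by_contra hn
    obtain ⟨vv, hvvS, hvv⟩ := h2.1 w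
    have hrw : π * τ = τ * (τ * π) * τ := by
      rw [← mul_assoc, hττ, one_mul]
    rw [hrw, hτdef] at hvv
    rw [sc_conj] at hvv
    rw [← hτdef] at hvv
    have hτw : τ w = u := Equiv.swap_apply_right u w
    rw [hτw] at hvv
    by_cases hvvu : vv = u
    · rw [hvvu] at hvv
      have hτu : τ u = w := Equiv.swap_apply_left u w
      rw [hτu] at hvv
      exact hn hvv
    · have hvvw : vv ≠ w := fun h => hw (h ▸ hvvS)
      have hτvv : τ vv = vv := Equiv.swap_apply_of_ne_of_ne hvvu hvvw
      rw [hτvv] at hvv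
      exact h1.2 u hu vv hvvS (fun h => hvvu h.symm) hvv
  have hπeq : π = τ * (τ * π) := by
    rw [← mul_assoc, hττ, one_mul]
  constructor
  · intro x
    obtain ⟨vv, hvvS, hvv⟩ := h1.1 x
    have hbr := sc_mul_swap_left u w hvv
    rw [← hτdef, ← hπeq] at hbr
    rcases hbr with h' | h' | h'
    · exact ⟨vv, Finset.mem_insert_of_mem hvvS, h'⟩
    · exact ⟨u, Finset.mem_insert_of_mem hu, h'⟩
    · exact ⟨w, Finset.mem_insert_self w S, h'⟩
  · -- separation
    have hL2 : ¬ π.SameCycle u w := by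
      have h' := not_sc_swap_mul_of_sc hne hsc
      rw [← hτdef, ← hπeq] at h'
      exact h'
    have aux : ∀ v₁, v₁ ∈ S → v₁ ≠ u → ∀ v₂, v₂ ∈ insert w S → v₂ ≠ v₁ → ¬ π.SameCycle v₁ v₂ := by
      intro v₁ h₁S h₁u v₂ h₂ h₂ne hsc12
      have h₁w : v₁ ≠ w := fun h => hw (h ▸ h₁S)
      have hbranch := sc_mul_swap_left u w hsc12
      rw [← hτdef] at hbranch
      rcases hbranch with hA | hA | hA
      · rcases Finset.mem_insert.mp h₂ with h₂w | h₂S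
        · rw [h₂w] at hA
          exact h1.2 v₁ h₁S u hu h₁u (hA.trans hsc.symm)
        · exact h1.2 v₁ h₁S v₂ h₂S (Ne.symm h₂ne) hA
      · exact h1.2 v₁ h₁S u hu h₁u hA
      · exact h1.2 v₁ h₁S u hu h₁u (hA.trans hsc.symm)
    intro v₁ h₁ v₂ h₂ hne12 hsc12
    rcases Finset.mem_insert.mp h₁ with h₁w | h₁S
    · rcases Finset.mem_insert.mp h₂ with h₂w | h₂S
      · exact hne12 (h₁w.trans h₂w.symm)
      · by_cases h₂u : v₂ = u
        · rw [h₁w, h₂u] at hsc12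
          exact hL2 hsc12.symm
        · exact aux v₂ h₂S h₂u v₁ h₁ hne12 hsc12.symm
    · by_cases h₁u : v₁ = u
      · rcases Finset.mem_insert.mp h₂ with h₂w | h₂S
        · rw [h₁u, h₂w] at hsc12
          exact hL2 hsc12
        · by_cases h₂u : v₂ = u
          · exact hne12 (h₁u.trans h₂u.symm)
          · exact aux v₂ h₂S h₂u v₁ h₁ hne12 hsc12.symm
      · exact aux v₁ h₁S h₁u v₂ h₂ (Ne.symm hne12) hsc12

lemma mergeElim {F : Set (Sym2 (Fin n))} {S : Finset (Fin n)} (hI : DInv F S)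
    {u w : Fin n} (hu : u ∈ S) (hw : w ∈ S) (hne : u ≠ w) (he : s(u,w) ∈ F)
    {ω : List (Sym2 (Fin n))} (hnd : ω.Nodup)
    (hmem : ∀ e, e ∈ ω ↔ e ∈ F ∧ e ≠ s(u,w)) :
    (prodOf ω).SameCycle u w := by
  classical
  by_contra hns
  have h3 := sc_swap_mul_of_not_sc hns
  have henot : s(u,w) ∉ ω := fun hc => ((hmem _).1 hc).2 rfl
  have hmem1 : ∀ e, e ∈ ω ++ [s(u,w)] ↔ e ∈ F := by
    intro e
    simp only [List.mem_append, List.mem_singleton, hmem e]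
    constructor
    · rintro (he' | rfl)
      · exact he'.1
      · exact he
    · intro heF
      by_cases hcase : e = s(u,w)
      · exact Or.inr hcase
      · exact Or.inl ⟨heF, hcase⟩
  have hnd1 : (ω ++ [s(u,w)]).Nodup := by simp [List.nodup_append, hnd, henot]; exact fun a ha hc => henot (hc ▸ ha)
  have h1 := hI (ω ++ [s(u,w)]) hnd1 hmem1
  rw [prodOf_append_singleton, tau_mk] at h1
  exact h1.2 u hu w hw hne h3

lemma chain {G : SimpleGraph (Fin n)} : ∀ {a b : Fin n} (p : G.Walk a b), p.IsPath →
    ∀ (F : Set (Sym2 (Fin n))) (S : Finset (Fin n)), DInv F S → a ∈ S →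
      (∀ x ∈ p.support, x ≠ a → x ∉ S) → (∀ e ∈ p.edges, e ∈ F) →
      DInv (F \ {e | e ∈ p.edges}) (S ∪ p.support.toFinset) := by
  intro a b p
  induction p with
  | nil =>
    rename_i u
    intro _ F S hI haS _ _
    have h1 : DInv (F \ {e | e ∈ (SimpleGraph.Walk.nil : G.Walk u u).edges}) S := by
      refine dinv_congr (fun e => ?_) hI
      simp [SimpleGraph.Walk.edges_nil]
    have h2 : S ∪ (SimpleGraph.Walk.nil : G.Walk u u).support.toFinset = S := by
      ext x
      simp only [SimpleGraph.Walk.support_nil, List.toFinset_cons, List.toFinset_nil,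
        LawfulSingleton.insert_empty_eq, Finset.mem_union, Finset.mem_singleton]
      constructor
      · rintro (hx | rfl)
        · exact hx
        · exact haS
      · exact Or.inl
    rw [h2]
    exact h1
  | @cons a a' b hadj p ih =>
    intro hp F S hI haS hsupp hedges
    have hp' : p.IsPath := hp.of_cons
    have hanotin : a ∉ p.support := (SimpleGraph.Walk.cons_isPath_iff hadj p).mp hp |>.2
    have hwu : a' ≠ a := fun h => hanotin (h ▸ p.start_mem_support)
    have hwS : a' ∉ S :=
      hsupp a' (by simp [SimpleGraph.Walk.support_cons, p.start_mem_support]) hwu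
    have heF : s(a, a') ∈ F := hedges _ (by simp [SimpleGraph.Walk.edges_cons])
    have hstep := step hI haS hwS heF
    have henotp : s(a, a') ∉ p.edges := by
      have := hp.isTrail.edges_nodup
      rw [SimpleGraph.Walk.edges_cons, List.nodup_cons] at this
      exact this.1
    have hmain := ih hp' (F \ {s(a, a')}) (insert a' S) hstep (Finset.mem_insert_self a' S)
      (fun x hx hxa' => by
        intro hxin
        rcases Finset.mem_insert.mp hxin with hxw | hxS
        · exact hxa' hxw
        · have hxa : x ≠ a := fun h => hanotin (h ▸ hx)
          exact hsupp x (by simp [SimpleGraph.Walk.support_cons, hx]) hxa hxS)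
      (fun e hep => ⟨hedges e (by simp [SimpleGraph.Walk.edges_cons, hep]),
        fun heq => henotp (heq ▸ hep)⟩)
    have hFS : ∀ e, e ∈ (F \ {s(a,a')}) \ {e | e ∈ p.edges} ↔
        e ∈ F \ {e | e ∈ (SimpleGraph.Walk.cons hadj p).edges} := by
      intro e
      simp only [Set.mem_diff, Set.mem_singleton_iff, Set.mem_setOf_eq,
        SimpleGraph.Walk.edges_cons, List.mem_cons]
      tauto
    have hSS : insert a' S ∪ p.support.toFinset =
        S ∪ (SimpleGraph.Walk.cons hadj p).support.toFinset := by
      ext x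
      simp only [Finset.mem_union, Finset.mem_insert, List.mem_toFinset,
        SimpleGraph.Walk.support_cons, List.mem_cons]
      constructor
      · rintro ((rfl | hxS) | hxp)
        · exact Or.inr (Or.inr p.start_mem_support)
        · exact Or.inl hxS
        · exact Or.inr (Or.inr hxp)
      · rintro (hxS | rfl | hxp)
        · exact Or.inl (Or.inr hxS)
        · exact Or.inl (Or.inr haS)
        · exact Or.inr hxp
    rw [hSS] at hmain
    exact dinv_congr hFS hmain


/-- Dénes' theorem (converse direction): if every edge ordering of a connected graph `G` on
`[n]` yields a product which is a full `n`-cycle in `S_n`, then `G` is a tree. -/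
theorem stmt7 (n : ℕ) (hn : 1 ≤ n) (G : SimpleGraph (Fin n)) (hconn : G.Connected)
    (h : ∀ ω : List (Sym2 (Fin n)), ω.Nodup → (∀ e, e ∈ ω ↔ e ∈ G.edgeSet) →
      IsFullCycle ((ω.map tau).reverse.prod)) :
    G.IsTree := by
  classical
  rw [SimpleGraph.isTree_iff]
  refine ⟨hconn, ?_⟩
  intro v c hc
  have hbase : ∀ x : Fin n, DInv G.edgeSet {x} := by
    intro x ω hnd hmem
    have hfc := h ω hnd hmem
    constructor
    · intro y
      obtain ⟨k, hk⟩ := hfc y x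
      exact ⟨x, Finset.mem_singleton_self x, ⟨(k : ℤ), by rw [zpow_natCast]; exact hk⟩⟩
    · intro v₁ h₁ v₂ h₂ hne
      rw [Finset.mem_singleton] at h₁ h₂
      exact absurd (h₁.trans h₂.symm) hne
  cases c with
  | nil => exact hc.ne_nil rfl
  | @cons _ b _ hadj q =>
    have hlen3 := hc.three_le_length
    rw [SimpleGraph.Walk.cons_isCycle_iff] at hc
    obtain ⟨hq, he1⟩ := hc
    have hqlen : 2 ≤ q.length := by
      rw [SimpleGraph.Walk.length_cons] at hlen3; omega
    -- decompose q from the end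
    obtain ⟨b', r, hbr, hqeq⟩ : ∃ (b' : Fin n) (r : G.Walk b b') (hbv : G.Adj b' v),
        q = r.concat hbv := by
      cases q with
      | nil => simp [SimpleGraph.Walk.length_nil] at hqlen
      | cons h₂ q₂ => exact SimpleGraph.Walk.exists_cons_eq_concat h₂ q₂
    -- r is a path avoiding v
    have hqrev_path : q.reverse.IsPath := hq.reverse
    rw [hqeq, SimpleGraph.Walk.reverse_concat] at hqrev_path
    rw [SimpleGraph.Walk.cons_isPath_iff] at hqrev_path
    obtain ⟨hrrev_path, hv_notin_rrev⟩ := hqrev_path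
    have hr_path : r.IsPath := (SimpleGraph.Walk.isPath_reverse_iff r).mp hrrev_path
    have hv_notin_r : v ∉ r.support := by
      rw [SimpleGraph.Walk.support_reverse, List.mem_reverse] at hv_notin_rrev
      exact hv_notin_rrev
    have hqedges : q.edges = r.edges ++ [s(b', v)] := by
      rw [hqeq, SimpleGraph.Walk.edges_concat, List.concat_eq_append]
    have hbb' : b ≠ b' := by
      intro hEq
      apply he1
      rw [hqedges, List.mem_append]
      right
      rw [List.mem_singleton, hEq, Sym2.eq_swap]
    have hqsupp : q.support = r.support ++ [v] := by
      rw [hqeq, SimpleGraph.Walk.concat_eq_append, SimpleGraph.Walk.support_append]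
      simp
    -- the second path q'
    have hconspath : (SimpleGraph.Walk.cons hadj r).IsPath := by
      rw [SimpleGraph.Walk.cons_isPath_iff]
      exact ⟨hr_path, hv_notin_r⟩
    set q' := (SimpleGraph.Walk.cons hadj r).reverse with hq'def
    have hq'path : q'.IsPath := hconspath.reverse
    have hq'edges : ∀ e, e ∈ q'.edges ↔ e = s(v, b) ∨ e ∈ r.edges := by
      intro e
      rw [hq'def, SimpleGraph.Walk.edges_reverse, List.mem_reverse,
        SimpleGraph.Walk.edges_cons, List.mem_cons]
    have hq'supp : ∀ x, x ∈ q'.support ↔ x = v ∨ x ∈ r.support := by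
      intro x
      rw [hq'def, SimpleGraph.Walk.support_reverse, List.mem_reverse,
        SimpleGraph.Walk.support_cons, List.mem_cons]
    -- chain along q
    have hIA' := chain q hq G.edgeSet {b} (hbase b) (Finset.mem_singleton_self b)
      (fun x _ hxb => by simp [hxb]) (fun e he9 => q.edges_subset_edgeSet he9)
    have hSA : ({b} : Finset (Fin n)) ∪ q.support.toFinset = q.support.toFinset := by
      ext x
      simp only [Finset.mem_union, Finset.mem_singleton, List.mem_toFinset]
      constructor
      · rintro (rfl | hx)
        · exact q.start_mem_support
        · exact hx
      · exact Or.inr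
    rw [hSA] at hIA'
    -- chain along q'
    have hIB' := chain q' hq'path G.edgeSet {b'} (hbase b') (Finset.mem_singleton_self b')
      (fun x _ hxb => by simp [hxb]) (fun e he9 => q'.edges_subset_edgeSet he9)
    have hSB : ({b'} : Finset (Fin n)) ∪ q'.support.toFinset = q'.support.toFinset := by
      ext x
      simp only [Finset.mem_union, Finset.mem_singleton, List.mem_toFinset]
      constructor
      · rintro (rfl | hx)
        · exact q'.start_mem_support
        · exact hx
      · exact Or.inr
    rw [hSB] at hIB'
    -- the common ordering of the remaining edges
    set Fstar : Set (Sym2 (Fin n)) :=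
      G.edgeSet \ {e | e = s(v, b) ∨ e ∈ q.edges} with hFstar
    set ω : List (Sym2 (Fin n)) := (Set.toFinite Fstar).toFinset.toList with hωdef
    have hωnd : ω.Nodup := Finset.nodup_toList _
    have hωmem : ∀ e, e ∈ ω ↔ e ∈ Fstar := by
      intro e
      rw [hωdef, Finset.mem_toList, Set.Finite.mem_toFinset]
    -- membership facts
    have hvb_mem : s(v, b) ∈ G.edgeSet := G.mem_edgeSet.mpr hadj
    have hvb'_mem : s(v, b') ∈ G.edgeSet := G.mem_edgeSet.mpr hbr.symm
    have hvb'_ne_vb : s(v, b') ≠ s(v, b) := by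
      intro hEq
      rw [Sym2.congr_right] at hEq
      exact hbb' hEq.symm
    have hvb'_notin_r : s(v, b') ∉ r.edges := by
      intro hmem'
      exact hv_notin_r (SimpleGraph.Walk.fst_mem_support_of_mem_edges r hmem')
    -- first sameCycle fact : v ~ b
    have sc1 : (prodOf ω).SameCycle v b := by
      refine mergeElim hIA' ?_ ?_ hadj.ne ⟨hvb_mem, he1⟩ hωnd ?_
      · rw [List.mem_toFinset, hqsupp]
        simp [q.end_mem_support]
      · rw [List.mem_toFinset]
        exact q.start_mem_support
      · intro e
        rw [hωmem e, hFstar]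
        simp only [Set.mem_diff, Set.mem_setOf_eq, Set.mem_singleton_iff]
        tauto
    -- second sameCycle fact : v ~ b'
    have sc2 : (prodOf ω).SameCycle v b' := by
      refine mergeElim hIB' ?_ ?_ (fun hEq => hbr.ne hEq.symm) ?_ hωnd ?_
      · rw [List.mem_toFinset, hq'supp]
        exact Or.inl rfl
      · rw [List.mem_toFinset]
        exact q'.start_mem_support
      · refine ⟨hvb'_mem, ?_⟩
        rw [Set.mem_setOf_eq, hq'edges]
        push_neg
        exact ⟨hvb'_ne_vb, hvb'_notin_r⟩
      · intro e
        rw [hωmem e, hFstar]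
        simp only [Set.mem_diff, Set.mem_setOf_eq, Set.mem_singleton_iff, hq'edges e, hqedges,
          List.mem_append, List.mem_singleton, Sym2.eq_swap (a := b') (b := v)]
        tauto
    -- contradiction via the invariant for q with the edge s(v,b) appended
    have hvb_notin_ω : s(v, b) ∉ ω := by
      intro hmem'
      exact ((hωmem _).1 hmem').2 (Or.inl rfl)
    have hmem1 : ∀ e, e ∈ ω ++ [s(v, b)] ↔ e ∈ G.edgeSet \ {e | e ∈ q.edges} := by
      intro e
      simp only [List.mem_append, List.mem_singleton, hωmem e, hFstar, Set.mem_diff,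
        Set.mem_setOf_eq, Set.mem_singleton_iff]
      constructor
      · rintro (⟨heE, hne'⟩ | rfl)
        · exact ⟨heE, fun hcon => hne' (Or.inr hcon)⟩
        · exact ⟨hvb_mem, he1⟩
      · rintro ⟨heE, hne'⟩
        by_cases hcase : e = s(v, b)
        · exact Or.inr hcase
        · exact Or.inl ⟨heE, by tauto⟩
    have hnd1 : (ω ++ [s(v, b)]).Nodup := by
      simp [List.nodup_append, hωnd, hvb_notin_ω]
      exact fun a ha hc => hvb_notin_ω (hc ▸ ha)
    have hQ := hIA' (ω ++ [s(v, b)]) hnd1 hmem1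
    rw [prodOf_append_singleton, tau_mk] at hQ
    -- memberships in q.support
    have hb'q : b' ∈ q.support.toFinset := by
      rw [List.mem_toFinset, hqsupp, List.mem_append]
      exact Or.inl r.end_mem_support
    have hbq : b ∈ q.support.toFinset := by
      rw [List.mem_toFinset]; exact q.start_mem_support
    have hvq : v ∈ q.support.toFinset := by
      rw [List.mem_toFinset]; exact q.end_mem_support
    have scb : (prodOf ω).SameCycle b' b := sc2.symm.trans sc1
    rcases sc_mul_swap_left v b scb with hA | hA | hA
    · exact hQ.2 b' hb'q b hbq (Ne.symm hbb') hA
    · exact hQ.2 b' hb'q v hvq hbr.ne hA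
    · exact hQ.2 b' hb'q b hbq (Ne.symm hbb') hA
end

section
/- If ω is an edge ordering of a signed graph G such that π_ω is an even (resp. odd) full cyclic permutation in H_n, then the loop-free edge ordering φ(ω) gives a full n-cycle in S_n and the number of loops |L_G| is even (resp. odd). -/
/-- The signed transposition `(i εj)` of the hyperoctahedral group `H_n`, realized inside
`Equiv.Perm ℤ`: for `ε = 1` it is the positive transposition `(i j)` (sending `i ↦ j`,
`j ↦ i`, `-i ↦ -j`, `-j ↦ -i`), for `ε = -1` it is the negative transposition `(i -j)`
(sending `i ↦ -j`, `j ↦ -i`, `-i ↦ j`, `-j ↦ i`). -/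
def sT (eps i j : ℤ) : Equiv.Perm ℤ :=
  Equiv.swap i (eps * j) * Equiv.swap (-i) (-(eps * j))

/-- The inversion transposition `(i -i)`, swapping `i` and `-i`. -/
def invT (i : ℤ) : Equiv.Perm ℤ := Equiv.swap i (-i)

/-- `IsSignedCycle η l ε` says that `η` is the signed cycle `(l₀ l₁ ... l_{m-1})_ε` in the
hyperoctahedral group (inside `Equiv.Perm ℤ`): it sends `l₀ ↦ l₁ ↦ ... ↦ l_{m-1} ↦ ε * l₀`,
acts on negatives by `η (-x) = -(η x)`, and fixes every element whose absolute value does not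
occur among the absolute values of entries of `l`. -/
def IsSignedCycle (η : Equiv.Perm ℤ) (l : List ℤ) (eps : ℤ) : Prop :=
  l ≠ [] ∧
  (∀ x : ℤ, η (-x) = -(η x)) ∧
  (∀ k : ℕ, k + 1 < l.length → η (l.getD k 0) = l.getD (k + 1) 0) ∧
  η (l.getD (l.length - 1) 0) = eps * l.getD 0 0 ∧
  (∀ x : ℤ, (∀ a ∈ l, |x| ≠ |a|) → η x = x)

/-- `η ∈ H_n` is an even full cyclic permutation: a signed cycle of length `n` whose entries
have pairwise distinct absolute values exhausting `[n] = {1, ..., n}`, with sign product `+`. -/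
def IsEvenFullCycle (n : ℕ) (η : Equiv.Perm ℤ) : Prop :=
  ∃ l : List ℤ, l.length = n ∧ (∀ a ∈ l, 1 ≤ |a| ∧ |a| ≤ (n : ℤ)) ∧
    (l.map fun a => |a|).Nodup ∧ IsSignedCycle η l 1

/-- `η ∈ H_n` is an odd full cyclic permutation: a signed cycle of length `n` whose entries
have pairwise distinct absolute values exhausting `[n]`, with sign product `-`. -/
def IsOddFullCycle (n : ℕ) (η : Equiv.Perm ℤ) : Prop :=
  ∃ l : List ℤ, l.length = n ∧ (∀ a ∈ l, 1 ≤ |a| ∧ |a| ≤ (n : ℤ)) ∧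
    (l.map fun a => |a|).Nodup ∧ IsSignedCycle η l (-1)

/-- `σ` is a full `n`-cycle of the symmetric group `S_n`, viewed inside `H_n ⊆ Equiv.Perm ℤ`:
a signed cycle of length `n` with all entries positive (in `[n]`, pairwise distinct) and
sign `+`. -/
def IsUnsignedFullCycle (n : ℕ) (σ : Equiv.Perm ℤ) : Prop :=
  ∃ l : List ℤ, l.length = n ∧ (∀ a ∈ l, 1 ≤ a ∧ a ≤ (n : ℤ)) ∧
    l.Nodup ∧ IsSignedCycle σ l 1

/-- The vertex `v : Fin n` regarded as the integer in `[n] = {1, ..., n}`. -/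
def vtx {n : ℕ} (v : Fin n) : ℤ := (v : ℤ) + 1

/-- Edges of the underlying unsigned multigraph of a signed graph: a (tagged) positive edge
`Sum.inl (i, j)` or a (tagged) negative edge `Sum.inr (i, j)`; unordered pairs `{i, j}` of
distinct vertices are represented by pairs `(i, j)` with `i < j`. -/
abbrev EdgeU (n : ℕ) := (Fin n × Fin n) ⊕ (Fin n × Fin n)

/-- Edges of a signed graph: a positive edge, a negative edge, or a loop at a vertex. -/
abbrev Edge (n : ℕ) := EdgeU n ⊕ Fin n

/-- The signed transposition of `H_n` associated to an edge of a signed graph: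
a positive edge `{i,j}` gives the positive transposition `(i j)`, a negative edge `{i,j}` gives
the negative transposition `(i -j)`, and a loop at `i` gives the inversion transposition `(i -i)`. -/
def tauS {n : ℕ} : Edge n → Equiv.Perm ℤ
  | .inl (.inl (i, j)) => sT 1 (vtx i) (vtx j)
  | .inl (.inr (i, j)) => sT (-1) (vtx i) (vtx j)
  | .inr v => invT (vtx v)

/-- The (unsigned) transposition `(i j) ∈ S_n ⊆ H_n` associated to an edge of the underlying
unsigned multigraph. -/
def tauU {n : ℕ} : EdgeU n → Equiv.Perm ℤ
  | .inl (i, j) => sT 1 (vtx i) (vtx j)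
  | .inr (i, j) => sT 1 (vtx i) (vtx j)

/-- `ω` is an edge ordering of the signed graph `G = ([n], P, N, L)`: a linear order
(enumeration without repetition) of all the edges of `G`. -/
def IsOrdering {n : ℕ} (P N : Finset (Fin n × Fin n)) (L : Finset (Fin n))
    (ω : List (Edge n)) : Prop :=
  ω.Nodup ∧ ∀ e : Edge n, e ∈ ω ↔ Sum.elim (Sum.elim (· ∈ P) (· ∈ N)) (· ∈ L) e

/-- `ω` is an edge ordering of the underlying unsigned multigraph with positive edges `P` and
negative edges `N`. -/
def IsOrderingU {n : ℕ} (P N : Finset (Fin n × Fin n)) (ω : List (EdgeU n)) : Prop :=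
  ω.Nodup ∧ ∀ e : EdgeU n, e ∈ ω ↔ Sum.elim (· ∈ P) (· ∈ N) e

/-- The permutation `π_ω = τ_{e_m} ⋯ τ_{e_1} ∈ H_n` associated to an edge ordering
`ω = (e_1, ..., e_m)` of a signed graph. -/
def piS {n : ℕ} (ω : List (Edge n)) : Equiv.Perm ℤ := ((ω.map tauS).reverse).prod

/-- The permutation `π_ω = τ_{e_m} ⋯ τ_{e_1} ∈ S_n ⊆ H_n` associated to an edge ordering `ω`
of an unsigned multigraph. -/
def piU {n : ℕ} (ω : List (EdgeU n)) : Equiv.Perm ℤ := ((ω.map tauU).reverse).prod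

/-- `φ(ω)`: the edge ordering of the underlying unsigned multigraph obtained from an edge
ordering `ω` of a signed graph by deleting the loops. -/
def deloop {n : ℕ} (ω : List (Edge n)) : List (EdgeU n) :=
  ω.filterMap (Sum.elim some fun _ => none)

namespace Stmt11Aux


abbrev NC (η : Equiv.Perm ℤ) : Prop := ∀ x : ℤ, η (-x) = -(η x)

lemma sT_apply {a b : ℤ} (ha : 0 < a) (hb : 0 < b) (hab : a ≠ b) {eps : ℤ}
    (he : eps = 1 ∨ eps = -1) (x : ℤ) :
    sT eps a b x = if x = a then eps * b else if x = eps * b then a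
      else if x = -a then -(eps * b) else if x = -(eps * b) then -a else x := by
  rcases he with rfl | rfl <;>
  · simp only [sT, Equiv.Perm.mul_apply, Equiv.swap_apply_def]
    split_ifs <;> omega

lemma invT_apply (a x : ℤ) :
    invT a x = if x = a then -a else if x = -a then a else x := by
  simp only [invT, Equiv.swap_apply_def]

lemma sign_of_pos {x : ℤ} (h : 0 < x) : Int.sign x = 1 := Int.sign_eq_one_iff_pos.mpr h
lemma sign_of_neg {x : ℤ} (h : x < 0) : Int.sign x = -1 := Int.sign_eq_neg_one_iff_neg.mpr h

lemma NC_sT {a b : ℤ} (ha : 0 < a) (hb : 0 < b) (hab : a ≠ b) {eps : ℤ}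
    (he : eps = 1 ∨ eps = -1) : NC (sT eps a b) := by
  intro x
  rw [sT_apply ha hb hab he, sT_apply ha hb hab he]
  rcases he with rfl | rfl <;> (split_ifs <;> omega)

lemma NC_invT (a : ℤ) : NC (invT a) := by
  intro x; rw [invT_apply, invT_apply]; split_ifs <;> omega

lemma sT_unsign {a b : ℤ} (ha : 0 < a) (hb : 0 < b) (hab : a ≠ b) {eps : ℤ}
    (he : eps = 1 ∨ eps = -1) (x : ℤ) :
    sT 1 a b x = Int.sign x * |sT eps a b x| := by
  rcases he with rfl | rfl
  · rw [sT_apply ha hb hab (Or.inl rfl) x]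
    rcases lt_trichotomy x 0 with hx | rfl | hx
    · rw [sign_of_neg hx]; split_ifs <;> simp only [Int.abs_eq_natAbs] <;> omega
    · rw [Int.sign_zero]; split_ifs <;> omega
    · rw [sign_of_pos hx]; split_ifs <;> simp only [Int.abs_eq_natAbs] <;> omega
  · rw [sT_apply ha hb hab (Or.inl rfl) x, sT_apply ha hb hab (Or.inr rfl) x]
    rcases lt_trichotomy x 0 with hx | rfl | hx
    · rw [sign_of_neg hx]; split_ifs <;> simp only [Int.abs_eq_natAbs] <;> omega
    · rw [Int.sign_zero]; split_ifs <;> omega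
    · rw [sign_of_pos hx]; split_ifs <;> simp only [Int.abs_eq_natAbs] <;> omega



-- abs involution and bounds
lemma sT_abs_invol {a b : ℤ} (ha : 0 < a) (hb : 0 < b) (hab : a ≠ b) {eps : ℤ}
    (he : eps = 1 ∨ eps = -1) (x : ℤ) (hx : 0 < x) :
    |sT eps a b (|sT eps a b x|)| = x := by
  rcases he with rfl | rfl <;>
  · rw [sT_apply ha hb hab (by tauto) x]
    rw [sT_apply ha hb hab (by tauto)]
    split_ifs <;> simp only [Int.abs_eq_natAbs] at * <;> omega

lemma sT_abs_mem {B a b : ℤ} (ha : 0 < a) (hb : 0 < b) (hab : a ≠ b)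
    (haB : a ≤ B) (hbB : b ≤ B) {eps : ℤ} (he : eps = 1 ∨ eps = -1) (x : ℤ)
    (hx1 : 1 ≤ x) (hx2 : x ≤ B) :
    1 ≤ |sT eps a b x| ∧ |sT eps a b x| ≤ B := by
  rcases he with rfl | rfl <;>
  · rw [sT_apply ha hb hab (by tauto) x]
    split_ifs <;> simp only [Int.abs_eq_natAbs] <;> omega

lemma invT_abs (a x : ℤ) : |invT a x| = |x| := by
  rw [invT_apply]; split_ifs <;> simp only [Int.abs_eq_natAbs] <;> omega

lemma invT_pm (a x : ℤ) : invT a x = x ∨ invT a x = -x := by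
  rw [invT_apply]; split_ifs <;> omega

lemma sT_zero {a b : ℤ} (ha : 0 < a) (hb : 0 < b) (hab : a ≠ b) {eps : ℤ}
    (he : eps = 1 ∨ eps = -1) : sT eps a b 0 = 0 := by
  rcases he with rfl | rfl <;> (rw [sT_apply ha hb hab (by tauto)]; split_ifs <;> omega)

lemma abs_apply_abs {η : Equiv.Perm ℤ} (hη : NC η) (y : ℤ) : |η (|y|)| = |η y| := by
  rcases abs_choice y with h | h
  · rw [h]
  · rw [h, hη, abs_neg]

-- products of signs over Icc
lemma prod_sign_sT {n : ℕ} {a b : ℤ} (ha : 0 < a) (hb : 0 < b) (hab : a ≠ b)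
    (haB : a ≤ (n : ℤ)) (hbB : b ≤ (n : ℤ)) {eps : ℤ} (he : eps = 1 ∨ eps = -1) :
    ∏ i ∈ Finset.Icc (1:ℤ) (n : ℤ), Int.sign (sT eps a b i) = 1 := by
  have hsub : ({a, b} : Finset ℤ) ⊆ Finset.Icc 1 (n : ℤ) := by
    intro x hx
    simp only [Finset.mem_insert, Finset.mem_singleton] at hx
    rw [Finset.mem_Icc]; rcases hx with rfl | rfl <;> omega
  have key : ∀ x ∈ Finset.Icc (1:ℤ) (n : ℤ), x ∉ ({a, b} : Finset ℤ) →
      Int.sign (sT eps a b x) = 1 := by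
    intro x hx hnx
    rw [Finset.mem_Icc] at hx
    simp only [Finset.mem_insert, Finset.mem_singleton] at hnx
    push_neg at hnx
    rw [sT_apply ha hb hab he]
    rcases he with rfl | rfl <;>
      (split_ifs <;> first | omega | exact sign_of_pos (by omega))
  rw [← Finset.prod_subset hsub key, Finset.prod_pair hab,
    sT_apply ha hb hab he a, sT_apply ha hb hab he b]
  rcases he with rfl | rfl <;>
    (split_ifs <;> first
      | omega
      | (first
          | (rw [show (1:ℤ) * b = b by ring, sign_of_pos hb, sign_of_pos ha]; ring)
          | (rw [show (-1:ℤ) * b = -b by ring, sign_of_neg (by omega : -b < 0),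
              sign_of_neg (by omega : -a < 0)]; ring)))

lemma prod_sign_invT {n : ℕ} {a : ℤ} (ha : 0 < a) (haB : a ≤ (n : ℤ)) :
    ∏ i ∈ Finset.Icc (1:ℤ) (n : ℤ), Int.sign (invT a i) = -1 := by
  have hsub : ({a} : Finset ℤ) ⊆ Finset.Icc 1 (n : ℤ) := by
    intro x hx; simp only [Finset.mem_singleton] at hx; rw [Finset.mem_Icc]; omega
  have key : ∀ x ∈ Finset.Icc (1:ℤ) (n : ℤ), x ∉ ({a} : Finset ℤ) →
      Int.sign (invT a x) = 1 := by
    intro x hx hnx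
    rw [Finset.mem_Icc] at hx
    simp only [Finset.mem_singleton] at hnx
    rw [invT_apply]
    split_ifs <;> first | omega | exact sign_of_pos (by omega)
  rw [← Finset.prod_subset hsub key, Finset.prod_singleton, invT_apply]
  split_ifs <;> first | omega | exact sign_of_neg (by omega)

-- multiplicativity
lemma prod_sign_mul {n : ℕ} (η τ : Equiv.Perm ℤ) (hη : NC η)
    (hmem : ∀ x : ℤ, 1 ≤ x → x ≤ (n:ℤ) → 1 ≤ |τ x| ∧ |τ x| ≤ (n:ℤ))
    (hinvol : ∀ x : ℤ, 0 < x → |τ (|τ x|)| = x) :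
    ∏ i ∈ Finset.Icc (1:ℤ) (n:ℤ), Int.sign (η (τ i)) =
      (∏ i ∈ Finset.Icc (1:ℤ) (n:ℤ), Int.sign (τ i)) *
        ∏ i ∈ Finset.Icc (1:ℤ) (n:ℤ), Int.sign (η i) := by
  have step : ∀ i ∈ Finset.Icc (1:ℤ) (n:ℤ),
      Int.sign (η (τ i)) = Int.sign (τ i) * Int.sign (η (|τ i|)) := by
    intro i hi
    rw [Finset.mem_Icc] at hi
    have h1 : 1 ≤ |τ i| := (hmem i hi.1 hi.2).1
    rcases abs_choice (τ i) with h | h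
    · have hp : 0 < τ i := by omega
      rw [h, sign_of_pos hp, one_mul]
    · have hn : τ i < 0 := by omega
      rw [h, hη, Int.sign_neg, sign_of_neg hn]; ring
  rw [Finset.prod_congr rfl step, Finset.prod_mul_distrib]
  congr 1
  refine Finset.prod_nbij' (fun x => |τ x|) (fun x => |τ x|) ?_ ?_ ?_ ?_ ?_
  · intro x hx; rw [Finset.mem_Icc] at *; exact hmem x hx.1 hx.2
  · intro x hx; rw [Finset.mem_Icc] at *; exact hmem x hx.1 hx.2
  · intro x hx; rw [Finset.mem_Icc] at hx; exact hinvol x (by omega)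
  · intro x hx; rw [Finset.mem_Icc] at hx; exact hinvol x (by omega)
  · intro x hx; rfl


-- structural lemmas about piS/piU/deloop
lemma piS_cons {n : ℕ} (e : Edge n) (ω : List (Edge n)) :
    piS (e :: ω) = piS ω * tauS e := by
  simp [piS, List.prod_append]

lemma piU_cons {n : ℕ} (e : EdgeU n) (ω : List (EdgeU n)) :
    piU (e :: ω) = piU ω * tauU e := by
  simp [piU, List.prod_append]

def loopsOf {n : ℕ} (ω : List (Edge n)) : List (Fin n) :=
  ω.filterMap (Sum.elim (fun _ => none) some)

def ValidE {n : ℕ} : Edge n → Prop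
  | .inl (.inl p) => p.1 < p.2
  | .inl (.inr p) => p.1 < p.2
  | .inr _ => True

lemma vtx_pos {n : ℕ} (v : Fin n) : 0 < vtx v := by
  simp only [vtx]; omega

lemma vtx_le {n : ℕ} (v : Fin n) : vtx v ≤ (n : ℤ) := by
  have := v.isLt; simp only [vtx]; omega

lemma vtx_ne {n : ℕ} {i j : Fin n} (h : i < j) : vtx i ≠ vtx j := by
  have : (i : ℕ) < (j : ℕ) := h
  simp only [vtx]; omega

-- the main induction
lemma main_step {n : ℕ} (η U : Equiv.Perm ℤ) (a b eps c : ℤ)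
    (ha : 0 < a) (hb : 0 < b) (hab : a ≠ b) (haB : a ≤ (n:ℤ)) (hbB : b ≤ (n:ℤ))
    (he : eps = 1 ∨ eps = -1)
    (hNC : NC η) (hU : ∀ x, U x = Int.sign x * |η x|)
    (hsgn : (∏ i ∈ Finset.Icc (1:ℤ) (n:ℤ), Int.sign (η i)) = c) :
    NC (η * sT eps a b) ∧
    (∀ x, (U * sT 1 a b) x = Int.sign x * |(η * sT eps a b) x|) ∧
    (∏ i ∈ Finset.Icc (1:ℤ) (n:ℤ), Int.sign ((η * sT eps a b) i)) = c := by
  refine ⟨?_, ?_, ?_⟩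
  · intro x
    rw [Equiv.Perm.mul_apply, Equiv.Perm.mul_apply, NC_sT ha hb hab he, hNC]
  · intro x
    rw [Equiv.Perm.mul_apply, Equiv.Perm.mul_apply, hU]
    rcases lt_trichotomy x 0 with hx | rfl | hx
    · have h1 : sT 1 a b x = Int.sign x * |sT eps a b x| := sT_unsign ha hb hab he x
      rw [sign_of_neg hx] at h1 ⊢
      have hne : sT eps a b x ≠ 0 := by
        intro h0
        have := sT_zero ha hb hab he
        have : x = 0 := by
          have := (sT eps a b).injective (h0.trans this.symm)
          exact this
        omega
      have hpos : 0 < |sT eps a b x| := abs_pos.mpr hne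
      rw [h1, show (-1 : ℤ) * |sT eps a b x| = -(|sT eps a b x|) by ring,
        sign_of_neg (by omega), hNC, abs_neg, abs_apply_abs hNC]
    · rw [sT_zero ha hb hab (Or.inl rfl), sT_zero ha hb hab he]
    · have h1 : sT 1 a b x = Int.sign x * |sT eps a b x| := sT_unsign ha hb hab he x
      rw [sign_of_pos hx] at h1 ⊢
      have hne : sT eps a b x ≠ 0 := by
        intro h0
        have h2 := sT_zero ha hb hab he
        have : x = 0 := (sT eps a b).injective (h0.trans h2.symm)
        omega
      have hpos : 0 < |sT eps a b x| := abs_pos.mpr hne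
      rw [h1, one_mul, one_mul, sign_of_pos hpos, one_mul, abs_apply_abs hNC]
  · have := prod_sign_mul (n := n) η (sT eps a b) hNC
      (fun x hx1 hx2 => sT_abs_mem ha hb hab haB hbB he x hx1 hx2)
      (fun x hx => sT_abs_invol ha hb hab he x hx)
    simp only [Equiv.Perm.mul_apply]
    rw [this, prod_sign_sT ha hb hab haB hbB he, one_mul, hsgn]

lemma main_step_loop {n : ℕ} (η U : Equiv.Perm ℤ) (a c : ℤ)
    (ha : 0 < a) (haB : a ≤ (n:ℤ))
    (hNC : NC η) (hU : ∀ x, U x = Int.sign x * |η x|)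
    (hsgn : (∏ i ∈ Finset.Icc (1:ℤ) (n:ℤ), Int.sign (η i)) = c) :
    NC (η * invT a) ∧
    (∀ x, U x = Int.sign x * |(η * invT a) x|) ∧
    (∏ i ∈ Finset.Icc (1:ℤ) (n:ℤ), Int.sign ((η * invT a) i)) = -c := by
  refine ⟨?_, ?_, ?_⟩
  · intro x
    rw [Equiv.Perm.mul_apply, Equiv.Perm.mul_apply, NC_invT a, hNC]
  · intro x
    rw [hU, Equiv.Perm.mul_apply]
    rcases invT_pm a x with h | h
    · rw [h]
    · rw [h, hNC, abs_neg]
  · have := prod_sign_mul (n := n) η (invT a) hNC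
      (fun x hx1 hx2 => by
        rw [invT_abs, abs_of_pos (by omega : (0:ℤ) < x)]; exact ⟨hx1, hx2⟩)
      (fun x hx => by rw [invT_abs, invT_abs, abs_abs, abs_of_pos hx])
    simp only [Equiv.Perm.mul_apply]
    rw [this, prod_sign_invT ha haB, hsgn]; ring

lemma main {n : ℕ} (ω : List (Edge n)) (hv : ∀ e ∈ ω, ValidE e) :
    NC (piS ω) ∧
    (∀ x : ℤ, piU (deloop ω) x = Int.sign x * |piS ω x|) ∧
    (∏ i ∈ Finset.Icc (1:ℤ) (n:ℤ), Int.sign (piS ω i)) = (-1) ^ (loopsOf ω).length := by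
  induction ω with
  | nil =>
      refine ⟨fun x => by simp [piS], fun x => by simp only [piS, piU, deloop, List.filterMap_nil, List.map_nil, List.reverse_nil, List.prod_nil, Equiv.Perm.one_apply]; exact (Int.sign_mul_abs x).symm, ?_⟩
      rw [show (loopsOf ([] : List (Edge n))).length = 0 by simp [loopsOf], pow_zero]
      refine Finset.prod_eq_one fun i hi => ?_
      rw [Finset.mem_Icc] at hi
      simp only [piS, List.map_nil, List.reverse_nil, List.prod_nil, Equiv.Perm.one_apply]
      exact sign_of_pos (by omega)
  | cons e ω ih =>
      obtain ⟨hNC, hU, hsgn⟩ := ih (fun e' he' => hv e' (List.mem_cons_of_mem _ he'))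
      have hve : ValidE e := hv e List.mem_cons_self
      match e with
      | .inl (.inl (i, j)) =>
          have hlt : i < j := hve
          have h := main_step (n := n) (piS ω) (piU (deloop ω)) (vtx i) (vtx j) 1 _
            (vtx_pos i) (vtx_pos j) (vtx_ne hlt) (vtx_le i) (vtx_le j) (Or.inl rfl)
            hNC hU hsgn
          refine ⟨?_, ?_, ?_⟩
          · rw [piS_cons]; exact h.1
          · intro x
            rw [piS_cons, show deloop ((Sum.inl (Sum.inl (i, j)) : Edge n) :: ω)
                = Sum.inl (i, j) :: deloop ω by simp [deloop], piU_cons]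
            exact h.2.1 x
          · rw [piS_cons, show (loopsOf ((Sum.inl (Sum.inl (i, j)) : Edge n) :: ω)).length
                = (loopsOf ω).length by simp [loopsOf, List.filterMap_cons]]
            exact h.2.2
      | .inl (.inr (i, j)) =>
          have hlt : i < j := hve
          have h := main_step (n := n) (piS ω) (piU (deloop ω)) (vtx i) (vtx j) (-1) _
            (vtx_pos i) (vtx_pos j) (vtx_ne hlt) (vtx_le i) (vtx_le j) (Or.inr rfl)
            hNC hU hsgn
          refine ⟨?_, ?_, ?_⟩
          · rw [piS_cons]; exact h.1
          · intro x
            rw [piS_cons, show deloop ((Sum.inl (Sum.inr (i, j)) : Edge n) :: ω)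
                = Sum.inr (i, j) :: deloop ω by simp [deloop], piU_cons]
            exact h.2.1 x
          · rw [piS_cons, show (loopsOf ((Sum.inl (Sum.inr (i, j)) : Edge n) :: ω)).length
                = (loopsOf ω).length by simp [loopsOf, List.filterMap_cons]]
            exact h.2.2
      | .inr v =>
          have h := main_step_loop (n := n) (piS ω) (piU (deloop ω)) (vtx v) _
            (vtx_pos v) (vtx_le v) hNC hU hsgn
          refine ⟨?_, ?_, ?_⟩
          · rw [piS_cons]; exact h.1
          · intro x
            rw [piS_cons, show deloop ((Sum.inr v : Edge n) :: ω) = deloop ω by simp [deloop, List.filterMap_cons]]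
            exact h.2.1 x
          · rw [piS_cons, show (loopsOf ((Sum.inr v : Edge n) :: ω)).length
                = (loopsOf ω).length + 1 by simp [loopsOf], pow_succ,
              show ((-1:ℤ) ^ (loopsOf ω).length * -1) = -((-1:ℤ) ^ (loopsOf ω).length) by ring]
            exact h.2.2

lemma map_eq_rotate {η : Equiv.Perm ℤ} {l : List ℤ} {c : ℤ} (hne : l ≠ [])
    (hstep : ∀ k : ℕ, k + 1 < l.length → η (l.getD k 0) = l.getD (k + 1) 0)
    (hlast : η (l.getD (l.length - 1) 0) = c) :
    l.map η = l.tail ++ [c] := by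
  have hlpos : 0 < l.length := List.length_pos_iff.mpr hne
  apply List.ext_getElem
  · simp only [List.length_map, List.length_append, List.length_tail, List.length_cons,
      List.length_nil]
    omega
  · intro i h1 h2
    rw [List.getElem_map]
    simp only [List.length_map] at h1
    by_cases hi : i + 1 < l.length
    · rw [List.getElem_append_left (by simp only [List.length_tail]; omega)]
      rw [List.getElem_tail]
      rw [← List.getD_eq_getElem l 0 h1, ← List.getD_eq_getElem l 0 hi]
      exact hstep i hi
    · have hieq : i = l.length - 1 := by omega
      rw [List.getElem_append_right (by simp only [List.length_tail]; omega)]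
      simp only [List.getElem_singleton]
      rw [← List.getD_eq_getElem l 0 h1, hieq]
      exact hlast

lemma prod_sign_sq {l : List ℤ} (h : ∀ a ∈ l, a ≠ 0) :
    (l.map Int.sign).prod * (l.map Int.sign).prod = 1 := by
  induction l with
  | nil => simp
  | cons a t ih =>
      simp only [List.map_cons, List.prod_cons]
      have ha : Int.sign a * Int.sign a = 1 := by
        rcases lt_trichotomy a 0 with h' | h' | h'
        · rw [sign_of_neg h']; ring
        · exact absurd h' (h a List.mem_cons_self)
        · rw [sign_of_pos h']; ring
      have ht := ih (fun b hb => h b (List.mem_cons_of_mem _ hb))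
      linear_combination ((t.map Int.sign).prod * (t.map Int.sign).prod) * ha + ht

lemma sgn_cycle {n : ℕ} {η : Equiv.Perm ℤ} {l : List ℤ} {eps : ℤ}
    (he : eps = 1 ∨ eps = -1)
    (hlen : l.length = n) (hmem : ∀ a ∈ l, 1 ≤ |a| ∧ |a| ≤ (n:ℤ))
    (hnd : (l.map fun a => |a|).Nodup) (hc : IsSignedCycle η l eps) :
    (∏ i ∈ Finset.Icc (1:ℤ) (n:ℤ), Int.sign (η i)) = eps := by
  obtain ⟨hne, hNC, hstep, hlast, _⟩ := hc
  have hnz : ∀ a ∈ l, a ≠ 0 := by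
    intro a ha h0; have := (hmem a ha).1; rw [h0] at this; simp at this
  have hfin : (l.map fun a => |a|).toFinset = Finset.Icc (1:ℤ) (n:ℤ) := by
    apply Finset.eq_of_subset_of_card_le
    · intro x hx
      rw [List.mem_toFinset] at hx
      simp only [List.mem_map] at hx
      obtain ⟨a, ha, rfl⟩ := hx
      rw [Finset.mem_Icc]; exact hmem a ha
    · rw [Int.card_Icc, List.toFinset_card_of_nodup hnd]
      simp only [List.length_map, hlen]
      omega
  rw [← hfin, List.prod_toFinset _ hnd, List.map_map]
  have h1 : l.map ((fun i => Int.sign (η i)) ∘ fun a => |a|)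
      = l.map (fun a => Int.sign a * Int.sign (η a)) := by
    apply List.map_congr_left
    intro a haa
    have ha0 : a ≠ 0 := hnz a haa
    have h1a := (hmem a haa).1
    simp only [Function.comp_apply]
    rcases abs_choice a with h | h
    · have hp : 0 < a := by omega
      rw [h, sign_of_pos hp, one_mul]
    · have hn : a < 0 := by omega
      rw [h, hNC, Int.sign_neg, sign_of_neg hn]; ring
  rw [h1, List.prod_map_mul]
  have h2 : l.map (fun a => Int.sign (η a)) = (l.map η).map Int.sign := by
    rw [List.map_map]; rfl
  rw [h2, map_eq_rotate hne hstep hlast, List.map_append, List.prod_append]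
  obtain ⟨a0, t, rfl⟩ := List.exists_cons_of_ne_nil hne
  have hsq := prod_sign_sq hnz
  simp only [List.map_cons, List.prod_cons, List.tail_cons, List.getD_cons_zero,
    List.map_nil, List.prod_nil, mul_one] at hsq ⊢
  rcases he with rfl | rfl
  · rw [one_mul]
    linear_combination hsq
  · rw [show (-1 : ℤ) * a0 = -a0 by ring, Int.sign_neg]
    linear_combination (-1 : ℤ) * hsq

lemma unsigned {n : ℕ} {η U : Equiv.Perm ℤ} (hNCu : NC η)
    (hU : ∀ x, U x = Int.sign x * |η x|)
    {l : List ℤ} {eps : ℤ} (he : eps = 1 ∨ eps = -1)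
    (hlen : l.length = n) (hmem : ∀ a ∈ l, 1 ≤ |a| ∧ |a| ≤ (n:ℤ))
    (hnd : (l.map fun a => |a|).Nodup) (hc : IsSignedCycle η l eps) :
    IsUnsignedFullCycle n U := by
  obtain ⟨hne, hNC, hstep, hlast, hfix⟩ := hc
  have hg : ∀ j : ℕ, j < l.length →
      (l.map fun a => |a|).getD j 0 = |l.getD j 0| := by
    intro j h
    rw [List.getD_eq_getElem _ _ (by simpa using h), List.getD_eq_getElem _ _ h,
      List.getElem_map]
  have hlpos : 0 < l.length := List.length_pos_iff.mpr hne
  have habs_pos : ∀ j : ℕ, j < l.length → 0 < |l.getD j 0| := by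
    intro j hj
    rw [List.getD_eq_getElem _ _ hj]
    have := (hmem _ (List.getElem_mem hj)).1
    omega
  refine ⟨l.map fun a => |a|, by simp [hlen], ?_, hnd, ?_, ?_, ?_, ?_, ?_⟩
  · intro a ha
    simp only [List.mem_map] at ha
    obtain ⟨b, hb, rfl⟩ := ha
    exact hmem b hb
  · simpa using hne
  · intro x
    rw [hU, hU, hNC, Int.sign_neg, abs_neg]; ring
  · intro k hk
    simp only [List.length_map] at hk
    rw [hg k (by omega), hg (k + 1) (by omega), hU,
      sign_of_pos (habs_pos k (by omega)), one_mul, abs_apply_abs hNC,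
      hstep k hk]
  · simp only [List.length_map]
    rw [hg (l.length - 1) (by omega), hg 0 (by omega), hU,
      sign_of_pos (habs_pos (l.length - 1) (by omega)), one_mul,
      abs_apply_abs hNC, hlast, one_mul, abs_mul]
    rcases he with rfl | rfl <;> simp
  · intro x hx
    have hfx : η x = x := by
      apply hfix
      intro a ha
      have := hx |a| (by simp only [List.mem_map]; exact ⟨a, ha, rfl⟩)
      simpa [abs_abs] using this
    rw [hU, hfx, Int.sign_mul_abs]

end Stmt11Aux

/-- If `ω` is an edge ordering of a signed graph `G = ([n], P, N, L)` such that `π_ω` is an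
even (resp. odd) full cyclic permutation in `H_n`, then the loop-free ordering `φ(ω)` gives a
full `n`-cycle in `S_n` and `|L|` is even (resp. odd). -/
theorem stmt11 (n : ℕ) (hn : 1 ≤ n) (P N : Finset (Fin n × Fin n)) (L : Finset (Fin n))
    (hP : ∀ p ∈ P, p.1 < p.2) (hN : ∀ p ∈ N, p.1 < p.2)
    (ω : List (Edge n)) (hω : IsOrdering P N L ω) :
    (IsEvenFullCycle n (piS ω) →
      IsUnsignedFullCycle n (piU (deloop ω)) ∧ Even L.card) ∧
    (IsOddFullCycle n (piS ω) →
      IsUnsignedFullCycle n (piU (deloop ω)) ∧ Odd L.card) := by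
    classical
  open Stmt11Aux in
  have hv : ∀ e ∈ ω, ValidE e := by
    intro e hee
    have hm := (hω.2 e).1 hee
    match e with
    | .inl (.inl p) => exact hP p (by simpa using hm)
    | .inl (.inr p) => exact hN p (by simpa using hm)
    | .inr v => trivial
  obtain ⟨hNC, hU, hsgn⟩ := Stmt11Aux.main ω hv
  have hndL : (Stmt11Aux.loopsOf ω).Nodup := by
    apply List.Nodup.filterMap _ hω.1
    intro a a' b hb hb'
    match a, a' with
    | .inr v, .inr v' =>
        simp only [Sum.elim_inr, Option.mem_def, Option.some.injEq] at hb hb'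
        rw [hb, hb']
    | .inl u, _ => simp at hb
    | _, .inl u => simp at hb'
  have htF : (Stmt11Aux.loopsOf ω).toFinset = L := by
    ext v
    rw [List.mem_toFinset]
    simp only [Stmt11Aux.loopsOf, List.mem_filterMap]
    constructor
    · rintro ⟨e, hee, hfe⟩
      match e with
      | .inl u => simp at hfe
      | .inr w =>
          simp only [Sum.elim_inr, Option.some.injEq] at hfe
          subst hfe
          simpa using (hω.2 (Sum.inr w)).1 hee
    · intro hvL
      exact ⟨Sum.inr v, (hω.2 (Sum.inr v)).2 (by simpa using hvL), by simp⟩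
  have hcard : (Stmt11Aux.loopsOf ω).length = L.card := by
    rw [← htF, List.toFinset_card_of_nodup hndL]
  have key : ∀ eps : ℤ, eps = 1 ∨ eps = -1 →
      (∃ l : List ℤ, l.length = n ∧ (∀ a ∈ l, 1 ≤ |a| ∧ |a| ≤ (n : ℤ)) ∧
        (l.map fun a => |a|).Nodup ∧ IsSignedCycle (piS ω) l eps) →
      IsUnsignedFullCycle n (piU (deloop ω)) ∧ ((-1 : ℤ)) ^ L.card = eps := by
    rintro eps he ⟨l, hlen, hmem, hnd, hc⟩
    refine ⟨Stmt11Aux.unsigned hNC hU he hlen hmem hnd hc, ?_⟩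
    rw [← hcard, ← hsgn]
    exact Stmt11Aux.sgn_cycle he hlen hmem hnd hc
  constructor
  · intro h
    obtain ⟨h1, h2⟩ := key 1 (Or.inl rfl) h
    refine ⟨h1, ?_⟩
    rcases Nat.even_or_odd L.card with he | ho
    · exact he
    · rw [ho.neg_one_pow] at h2; norm_num at h2
  · intro h
    obtain ⟨h1, h2⟩ := key (-1) (Or.inr rfl) h
    refine ⟨h1, ?_⟩
    rcases Nat.even_or_odd L.card with he | ho
    · rw [he.neg_one_pow] at h2; norm_num at h2
    · exact ho
end

section
/- If \bar{ω} is an edge ordering of the underlying unsigned multigraph of a signed graph G such that π_{\bar{ω}} is a full n-cycle in S_n, and |L_G| is even (resp. odd), then every edge ordering ω of G whose restriction to non-loop edges equals \bar{ω} satisfies that π_ω is an even (resp. odd) full cyclic permutation in H_n. -/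
section Aux

lemma vtx_pos {n : ℕ} (v : Fin n) : 1 ≤ vtx v := by
  unfold vtx; omega
lemma vtx_le {n : ℕ} (v : Fin n) : vtx v ≤ (n : ℤ) := by
  have := v.isLt; unfold vtx; omega
lemma vtx_ne {n : ℕ} {v w : Fin n} (h : v ≠ w) : vtx v ≠ vtx w := by
  unfold vtx; intro hc
  exact h (Fin.ext (by omega))

lemma sT_one_apply {i j : ℤ} (hi : 1 ≤ i) (hj : 1 ≤ j) (hij : i ≠ j) (x : ℤ) :
    sT 1 i j x = if x = i then j else if x = j then i else if x = -i then -j else if x = -j then -i else x := by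
  simp only [sT, Equiv.Perm.mul_apply, Equiv.swap_apply_def, one_mul]
  split_ifs <;> omega

lemma sT_neg_apply {i j : ℤ} (hi : 1 ≤ i) (hj : 1 ≤ j) (hij : i ≠ j) (x : ℤ) :
    sT (-1) i j x = if x = i then -j else if x = j then -i else if x = -i then j else if x = -j then i else x := by
  simp only [sT, Equiv.Perm.mul_apply, Equiv.swap_apply_def, neg_mul, one_mul, neg_neg]
  split_ifs <;> omega

lemma invT_apply (i x : ℤ) :
    invT i x = if x = i then -i else if x = -i then i else x := by
  simp only [invT, Equiv.swap_apply_def]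


def GoodS {n : ℕ} : Edge n → Prop
  | .inl (.inl p) => p.1 ≠ p.2
  | .inl (.inr p) => p.1 ≠ p.2
  | .inr _ => True

def GoodU {n : ℕ} : EdgeU n → Prop
  | .inl p => p.1 ≠ p.2
  | .inr p => p.1 ≠ p.2

lemma tauS_neg {n : ℕ} (e : Edge n) (he : GoodS e) (x : ℤ) :
    tauS e (-x) = -(tauS e x) := by
  match e with
  | .inl (.inl (i, j)) =>
    have hij : vtx i ≠ vtx j := vtx_ne he
    simp only [tauS, sT_one_apply (vtx_pos i) (vtx_pos j) hij]
    have h1 := vtx_pos i; have h2 := vtx_pos j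
    split_ifs <;> omega
  | .inl (.inr (i, j)) =>
    have hij : vtx i ≠ vtx j := vtx_ne he
    simp only [tauS, sT_neg_apply (vtx_pos i) (vtx_pos j) hij]
    have h1 := vtx_pos i; have h2 := vtx_pos j
    split_ifs <;> omega
  | .inr v =>
    simp only [tauS, invT_apply]
    have h1 := vtx_pos v
    split_ifs <;> omega

lemma tauU_neg {n : ℕ} (e : EdgeU n) (he : GoodU e) (x : ℤ) :
    tauU e (-x) = -(tauU e x) := by
  match e with
  | .inl (i, j) =>
    have hij : vtx i ≠ vtx j := vtx_ne he
    simp only [tauU, sT_one_apply (vtx_pos i) (vtx_pos j) hij]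
    have h1 := vtx_pos i; have h2 := vtx_pos j
    split_ifs <;> omega
  | .inr (i, j) =>
    have hij : vtx i ≠ vtx j := vtx_ne he
    simp only [tauU, sT_one_apply (vtx_pos i) (vtx_pos j) hij]
    have h1 := vtx_pos i; have h2 := vtx_pos j
    split_ifs <;> omega

lemma piS_nil {n : ℕ} : piS ([] : List (Edge n)) = 1 := rfl
lemma piS_cons {n : ℕ} (e : Edge n) (ω : List (Edge n)) :
    piS (e :: ω) = piS ω * tauS e := by
  simp [piS]
lemma piU_nil {n : ℕ} : piU ([] : List (EdgeU n)) = 1 := rfl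
lemma piU_cons {n : ℕ} (e : EdgeU n) (ω : List (EdgeU n)) :
    piU (e :: ω) = piU ω * tauU e := by
  simp [piU]

lemma deloop_nil {n : ℕ} : deloop ([] : List (Edge n)) = [] := rfl
lemma deloop_cons_inl {n : ℕ} (e : EdgeU n) (ω : List (Edge n)) :
    deloop (.inl e :: ω) = e :: deloop ω := by simp [deloop]
lemma deloop_cons_inr {n : ℕ} (v : Fin n) (ω : List (Edge n)) :
    deloop (.inr v :: ω) = deloop ω := by rfl

lemma piS_neg {n : ℕ} (ω : List (Edge n)) (hg : ∀ e ∈ ω, GoodS e) (x : ℤ) :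
    piS ω (-x) = -(piS ω x) := by
  induction ω generalizing x with
  | nil => simp [piS_nil]
  | cons e ω ih =>
    simp only [piS_cons, Equiv.Perm.mul_apply]
    rw [tauS_neg e (hg e (by simp)), ih (fun e he => hg e (by simp [he]))]

lemma piU_neg {n : ℕ} (ω : List (EdgeU n)) (hg : ∀ e ∈ ω, GoodU e) (x : ℤ) :
    piU ω (-x) = -(piU ω x) := by
  induction ω generalizing x with
  | nil => simp [piU_nil]
  | cons e ω ih =>
    simp only [piU_cons, Equiv.Perm.mul_apply]
    rw [tauU_neg e (hg e (by simp)), ih (fun e he => hg e (by simp [he]))]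

lemma abs_congr {η : Equiv.Perm ℤ} (hη : ∀ x, η (-x) = -(η x)) {a b : ℤ}
    (h : |a| = |b|) : |η a| = |η b| := by
  rcases abs_eq_abs.mp h with rfl | rfl
  · rfl
  · rw [hη, abs_neg]
lemma goodU_of_goodS {n : ℕ} {e : EdgeU n} (h : GoodS (Sum.inl e : Edge n)) : GoodU e := by
  match e with
  | .inl p => exact h
  | .inr p => exact h

lemma abs_tauS_tauU {n : ℕ} (e : EdgeU n) (he : GoodU e) (x : ℤ) :
    |tauS (Sum.inl e : Edge n) x| = |tauU e x| := by
  match e with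
  | .inl (i, j) => rfl
  | .inr (i, j) =>
    have hij : vtx i ≠ vtx j := vtx_ne he
    have h1 := vtx_pos i; have h2 := vtx_pos j
    simp only [tauS, tauU, sT_one_apply h1 h2 hij, sT_neg_apply h1 h2 hij]
    split_ifs <;> simp [abs_neg]

lemma abs_invT (i x : ℤ) : |invT i x| = |x| := by
  rw [invT_apply]; split_ifs <;> simp_all [abs_neg]

lemma abs_piS_deloop {n : ℕ} (ω : List (Edge n)) (hg : ∀ e ∈ ω, GoodS e) (x : ℤ) :
    |piS ω x| = |piU (deloop ω) x| := by
  induction ω generalizing x with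
  | nil => simp [piS_nil, deloop_nil, piU_nil]
  | cons e ω ih =>
    have hg' : ∀ e ∈ ω, GoodS e := fun e he => hg e (by simp [he])
    match e with
    | .inl e' =>
      rw [deloop_cons_inl, piS_cons, piU_cons, Equiv.Perm.mul_apply, Equiv.Perm.mul_apply]
      calc |piS ω (tauS (Sum.inl e') x)| = |piS ω (tauU e' x)| :=
            abs_congr (piS_neg ω hg') (abs_tauS_tauU e' (goodU_of_goodS (hg _ (by simp))) x)
        _ = |piU (deloop ω) (tauU e' x)| := ih hg' _
    | .inr v =>
      rw [deloop_cons_inr, piS_cons, Equiv.Perm.mul_apply]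
      calc |piS ω (tauS (Sum.inr v : Edge n) x)| = |piS ω x| :=
            abs_congr (piS_neg ω hg') (abs_invT (vtx v) x)
        _ = |piU (deloop ω) x| := ih hg' _

lemma pow_neg_comm {η : Equiv.Perm ℤ} (hη : ∀ x, η (-x) = -(η x)) (k : ℕ) (x : ℤ) :
    (η ^ k) (-x) = -((η ^ k) x) := by
  induction k generalizing x with
  | zero => simp
  | succ k ih => simp only [pow_succ, Equiv.Perm.mul_apply, hη, ih]

lemma absPow {π σ : Equiv.Perm ℤ} (hπ : ∀ x, π (-x) = -(π x))
    (h : ∀ x, |π x| = |σ x|) (k : ℕ) (x : ℤ) : |(π ^ k) x| = |(σ ^ k) x| := by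
  induction k generalizing x with
  | zero => simp
  | succ k ih =>
    simp only [pow_succ, Equiv.Perm.mul_apply]
    calc |(π ^ k) (π x)| = |(π ^ k) (σ x)| := abs_congr (pow_neg_comm hπ k) (h x)
      _ = |(σ ^ k) (σ x)| := ih _

lemma tauS_fixed {n : ℕ} (e : Edge n) (he : GoodS e) {x : ℤ}
    (hx1 : ¬(1 ≤ x ∧ x ≤ (n : ℤ))) (hx2 : ¬(1 ≤ -x ∧ -x ≤ (n : ℤ))) :
    tauS e x = x := by
  match e with
  | .inl (.inl (i, j)) =>
    have hij : vtx i ≠ vtx j := vtx_ne he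
    have h1 := vtx_pos i; have h2 := vtx_pos j
    have h3 := vtx_le i; have h4 := vtx_le j
    simp only [tauS, sT_one_apply h1 h2 hij]
    split_ifs <;> omega
  | .inl (.inr (i, j)) =>
    have hij : vtx i ≠ vtx j := vtx_ne he
    have h1 := vtx_pos i; have h2 := vtx_pos j
    have h3 := vtx_le i; have h4 := vtx_le j
    simp only [tauS, sT_neg_apply h1 h2 hij]
    split_ifs <;> omega
  | .inr v =>
    have h1 := vtx_pos v; have h3 := vtx_le v
    simp only [tauS, invT_apply]
    split_ifs <;> omega

lemma piS_fixed {n : ℕ} (ω : List (Edge n)) (hg : ∀ e ∈ ω, GoodS e) {x : ℤ}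
    (hx1 : ¬(1 ≤ x ∧ x ≤ (n : ℤ))) (hx2 : ¬(1 ≤ -x ∧ -x ≤ (n : ℤ))) :
    piS ω x = x := by
  induction ω with
  | nil => simp [piS_nil]
  | cons e ω ih =>
    rw [piS_cons, Equiv.Perm.mul_apply, tauS_fixed e (hg e (by simp)) hx1 hx2,
      ih (fun e he => hg e (by simp [he]))]
lemma sign_sq {x : ℤ} (hx : x ≠ 0) : Int.sign x * Int.sign x = 1 := by
  rcases lt_trichotomy x 0 with h | h | h
  · rw [Int.sign_eq_neg_one_of_neg h]; ring
  · exact absurd h hx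
  · rw [Int.sign_eq_one_of_pos h]; ring

lemma sign_apply_abs {η : Equiv.Perm ℤ} (hη : ∀ x, η (-x) = -(η x)) {x : ℤ} (hx : x ≠ 0) :
    Int.sign (η |x|) = Int.sign x * Int.sign (η x) := by
  rcases lt_trichotomy x 0 with h | h | h
  · rw [abs_of_neg h, hη, Int.sign_neg, Int.sign_eq_neg_one_of_neg h]; ring
  · exact absurd h hx
  · rw [abs_of_pos h, Int.sign_eq_one_of_pos h, one_mul]

lemma prod_step_loop {n : ℕ} {η : Equiv.Perm ℤ} (hη : ∀ x, η (-x) = -(η x)) {a : ℤ}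
    (ha : a ∈ Finset.Icc (1 : ℤ) (n : ℤ)) :
    (∏ i ∈ Finset.Icc (1 : ℤ) (n : ℤ), Int.sign (η (invT a i))) =
      -∏ i ∈ Finset.Icc (1 : ℤ) (n : ℤ), Int.sign (η i) := by
  rw [← Finset.mul_prod_erase _ (fun i => Int.sign (η (invT a i))) ha,
    ← Finset.mul_prod_erase _ (fun i => Int.sign (η i)) ha]
  have ha1 : 1 ≤ a := (Finset.mem_Icc.mp ha).1
  have h1 : invT a a = -a := by rw [invT_apply]; simp
  have h2 : ∀ i ∈ (Finset.Icc (1 : ℤ) (n : ℤ)).erase a, Int.sign (η (invT a i)) = Int.sign (η i) := by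
    intro i hi
    obtain ⟨hne, hmem⟩ := Finset.mem_erase.mp hi
    have hi1 : 1 ≤ i := (Finset.mem_Icc.mp hmem).1
    rw [invT_apply]
    have : ¬ i = a := hne
    have : ¬ i = -a := by omega
    simp_all
  rw [Finset.prod_congr rfl h2, h1, hη, Int.sign_neg, neg_mul]

lemma prod_step_edge {n : ℕ} {η : Equiv.Perm ℤ} {a b : ℤ}
    (ha : a ∈ Finset.Icc (1 : ℤ) (n : ℤ)) (hb : b ∈ Finset.Icc (1 : ℤ) (n : ℤ)) (hab : a ≠ b)
    (τ : Equiv.Perm ℤ)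
    (hfix : ∀ i ∈ Finset.Icc (1 : ℤ) (n : ℤ), i ≠ a → i ≠ b → τ i = i)
    (hsign : Int.sign (η (τ a)) * Int.sign (η (τ b)) = Int.sign (η a) * Int.sign (η b)) :
    (∏ i ∈ Finset.Icc (1 : ℤ) (n : ℤ), Int.sign (η (τ i))) =
      ∏ i ∈ Finset.Icc (1 : ℤ) (n : ℤ), Int.sign (η i) := by
  have hb' : b ∈ (Finset.Icc (1 : ℤ) (n : ℤ)).erase a := Finset.mem_erase.mpr ⟨fun h => hab h.symm, hb⟩
  rw [← Finset.mul_prod_erase _ (fun i => Int.sign (η (τ i))) ha,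
    ← Finset.mul_prod_erase _ (fun i => Int.sign (η (τ i))) hb',
    ← Finset.mul_prod_erase _ (fun i => Int.sign (η i)) ha,
    ← Finset.mul_prod_erase _ (fun i => Int.sign (η i)) hb']
  have h2 : ∀ i ∈ ((Finset.Icc (1 : ℤ) (n : ℤ)).erase a).erase b,
      Int.sign (η (τ i)) = Int.sign (η i) := by
    intro i hi
    obtain ⟨hne1, hi'⟩ := Finset.mem_erase.mp hi
    obtain ⟨hne2, hmem⟩ := Finset.mem_erase.mp hi'
    rw [hfix i hmem hne2 hne1]
  rw [Finset.prod_congr rfl h2, ← mul_assoc, ← mul_assoc, hsign]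
def loopsList {n : ℕ} (ω : List (Edge n)) : List (Fin n) :=
  ω.filterMap (Sum.elim (fun _ => none) some)

lemma loopsList_nil {n : ℕ} : loopsList ([] : List (Edge n)) = [] := rfl
lemma loopsList_cons_inl {n : ℕ} (e : EdgeU n) (ω : List (Edge n)) :
    loopsList (.inl e :: ω) = loopsList ω := by rfl
lemma loopsList_cons_inr {n : ℕ} (v : Fin n) (ω : List (Edge n)) :
    loopsList (.inr v :: ω) = v :: loopsList ω := by simp [loopsList]

lemma vtx_mem_Icc {n : ℕ} (v : Fin n) : vtx v ∈ Finset.Icc (1 : ℤ) (n : ℤ) :=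
  Finset.mem_Icc.mpr ⟨vtx_pos v, vtx_le v⟩

lemma psi_piS {n : ℕ} (ω : List (Edge n)) (hg : ∀ e ∈ ω, GoodS e) :
    (∏ i ∈ Finset.Icc (1 : ℤ) (n : ℤ), Int.sign (piS ω i)) =
      (-1 : ℤ) ^ (loopsList ω).length := by
  induction ω with
  | nil =>
    rw [loopsList_nil]
    simp only [piS_nil, List.length_nil, pow_zero]
    apply Finset.prod_eq_one
    intro i hi
    have h := (Finset.mem_Icc.mp hi).1
    simp only [Equiv.Perm.one_apply]
    exact Int.sign_eq_one_of_pos (by omega)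
  | cons e ω ih =>
    have hg' : ∀ e ∈ ω, GoodS e := fun e he => hg e (by simp [he])
    have hsgn := piS_neg ω hg'
    simp only [piS_cons, Equiv.Perm.mul_apply]
    match e with
    | .inr v =>
      rw [loopsList_cons_inr, List.length_cons, pow_succ]
      have : (∏ i ∈ Finset.Icc (1 : ℤ) (n : ℤ), Int.sign (piS ω (tauS (Sum.inr v : Edge n) i))) =
          -∏ i ∈ Finset.Icc (1 : ℤ) (n : ℤ), Int.sign (piS ω i) :=
        prod_step_loop hsgn (vtx_mem_Icc v)
      rw [this, ih hg']; ring
    | .inl (.inl (i, j)) =>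
      rw [loopsList_cons_inl]
      have hij : vtx i ≠ vtx j :=
        vtx_ne (show i ≠ j from hg (Sum.inl (Sum.inl (i, j))) (by simp))
      have h1 := vtx_pos i; have h2 := vtx_pos j
      have happ := sT_one_apply h1 h2 hij
      have : (∏ m ∈ Finset.Icc (1 : ℤ) (n : ℤ),
          Int.sign (piS ω (tauS (Sum.inl (Sum.inl (i, j)) : Edge n) m))) =
          ∏ m ∈ Finset.Icc (1 : ℤ) (n : ℤ), Int.sign (piS ω m) := by
        apply prod_step_edge (vtx_mem_Icc i) (vtx_mem_Icc j) hij
        · intro m hm hma hmb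
          have hm1 := (Finset.mem_Icc.mp hm).1
          show sT 1 (vtx i) (vtx j) m = m
          rw [happ]; split_ifs <;> omega
        · show Int.sign (piS ω (sT 1 (vtx i) (vtx j) (vtx i))) *
            Int.sign (piS ω (sT 1 (vtx i) (vtx j) (vtx j))) = _
          have e1 : sT 1 (vtx i) (vtx j) (vtx i) = vtx j := by rw [happ]; simp
          have e2 : sT 1 (vtx i) (vtx j) (vtx j) = vtx i := by
            rw [happ]; split_ifs <;> omega
          rw [e1, e2, mul_comm]
      rw [this, ih hg']
    | .inl (.inr (i, j)) =>
      rw [loopsList_cons_inl]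
      have hij : vtx i ≠ vtx j :=
        vtx_ne (show i ≠ j from hg (Sum.inl (Sum.inr (i, j))) (by simp))
      have h1 := vtx_pos i; have h2 := vtx_pos j
      have happ := sT_neg_apply h1 h2 hij
      have : (∏ m ∈ Finset.Icc (1 : ℤ) (n : ℤ),
          Int.sign (piS ω (tauS (Sum.inl (Sum.inr (i, j)) : Edge n) m))) =
          ∏ m ∈ Finset.Icc (1 : ℤ) (n : ℤ), Int.sign (piS ω m) := by
        apply prod_step_edge (vtx_mem_Icc i) (vtx_mem_Icc j) hij
        · intro m hm hma hmb
          have hm1 := (Finset.mem_Icc.mp hm).1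
          show sT (-1) (vtx i) (vtx j) m = m
          rw [happ]; split_ifs <;> omega
        · show Int.sign (piS ω (sT (-1) (vtx i) (vtx j) (vtx i))) *
            Int.sign (piS ω (sT (-1) (vtx i) (vtx j) (vtx j))) = _
          have e1 : sT (-1) (vtx i) (vtx j) (vtx i) = -(vtx j) := by rw [happ]; simp
          have e2 : sT (-1) (vtx i) (vtx j) (vtx j) = -(vtx i) := by
            rw [happ]; split_ifs <;> omega
          rw [e1, e2, hsgn, hsgn, Int.sign_neg, Int.sign_neg]; ring
      rw [this, ih hg']
lemma loopsList_length {n : ℕ} {P N : Finset (Fin n × Fin n)} {L : Finset (Fin n)}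
    {ω : List (Edge n)} (hω : IsOrdering P N L ω) : (loopsList ω).length = L.card := by
  obtain ⟨hnd, hmem⟩ := hω
  have hinj : ∀ (a a' : Edge n) (b : Fin n),
      b ∈ Sum.elim (fun _ => none) some a → b ∈ Sum.elim (fun _ => none) some a' → a = a' := by
    intro a a' b h1 h2
    match a, a' with
    | .inr v, .inr w => simp_all
    | .inl e, _ => simp at h1
    | .inr v, .inl e => simp at h2
  have hnd' : (loopsList ω).Nodup := List.Nodup.filterMap hinj hnd
  have hset : (loopsList ω).toFinset = L := by
    apply Finset.ext
    intro v
    rw [List.mem_toFinset]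
    have h1 : v ∈ loopsList ω ↔ Sum.inr v ∈ ω := by
      simp [loopsList, List.mem_filterMap]
    rw [h1, hmem]
    simp
  rw [← hset, List.toFinset_card_of_nodup hnd']

lemma toFinset_eq_Icc {n : ℕ} {l : List ℤ} (hlen : l.length = n)
    (hb : ∀ a ∈ l, 1 ≤ a ∧ a ≤ (n : ℤ)) (hnd : l.Nodup) :
    l.toFinset = Finset.Icc (1 : ℤ) (n : ℤ) := by
  apply Finset.eq_of_subset_of_card_le
  · intro a ha
    rw [List.mem_toFinset] at ha
    exact Finset.mem_Icc.mpr (hb a ha)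
  · rw [List.toFinset_card_of_nodup hnd, hlen, Int.card_Icc]
    omega

lemma map_getD_range {α : Type*} (l : List ℤ) (f : ℤ → α) :
    (List.range l.length).map (fun k => f (l.getD k 0)) = l.map f := by
  apply List.ext_getElem
  · simp
  · intro k h1 h2
    simp only [List.getElem_map, List.getElem_range]
    rw [List.getD_eq_getElem l 0 (by simpa using h1)]

lemma getD_range_map (n : ℕ) (g : ℕ → ℤ) {k : ℕ} (hk : k < n) :
    ((List.range n).map g).getD k 0 = g k := by
  rw [List.getD_eq_getElem _ 0 (by simpa using hk)]
  simp

lemma sign_eps {x l₀ s : ℤ} (habs : |x| = l₀) (hl : 1 ≤ l₀) (hs : Int.sign x = s) :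
    x = s * l₀ := by
  rcases (abs_eq (by omega : (0:ℤ) ≤ l₀)).mp habs with rfl | rfl
  · rw [← hs, Int.sign_eq_one_of_pos (by omega)]; ring
  · rw [← hs, Int.sign_eq_neg_one_of_neg (by omega)]; ring
lemma master (n : ℕ) (hn : 1 ≤ n) (P N : Finset (Fin n × Fin n)) (L : Finset (Fin n))
    (hP : ∀ p ∈ P, p.1 < p.2) (hN : ∀ p ∈ N, p.1 < p.2)
    (ωbar : List (EdgeU n)) (hcyc : IsUnsignedFullCycle n (piU ωbar))
    (ω : List (Edge n)) (hω : IsOrdering P N L ω) (hdel : deloop ω = ωbar) :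
    ∃ l' : List ℤ, l'.length = n ∧ (∀ a ∈ l', 1 ≤ |a| ∧ |a| ≤ (n : ℤ)) ∧
      (l'.map fun a => |a|).Nodup ∧ IsSignedCycle (piS ω) l' ((-1) ^ L.card) := by
  obtain ⟨l, hlen, hbnd, hnd, hneσ, hsgnσ, hfwd, hlast, hfixσ⟩ := hcyc
  rw [hlen] at hfwd hlast
  set π := piS ω with hπdef
  set σ := piU ωbar with hσdef
  have hg : ∀ e ∈ ω, GoodS e := by
    intro e he
    rw [(hω.2 e)] at he
    match e with
    | .inl (.inl p) =>
      simp only [Sum.elim_inl] at he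
      exact Fin.ne_of_lt (hP p he)
    | .inl (.inr p) =>
      simp only [Sum.elim_inl, Sum.elim_inr] at he
      exact Fin.ne_of_lt (hN p he)
    | .inr v => trivial
  have hπ : ∀ x, π (-x) = -(π x) := piS_neg ω hg
  have habs : ∀ x, |π x| = |σ x| := by
    intro x; rw [hσdef, ← hdel]; exact abs_piS_deloop ω hg x
  set l₀ := l.getD 0 0 with hl₀
  have hlpos : 0 < l.length := by omega
  have hmem₀ : l₀ ∈ l := by rw [hl₀, List.getD_eq_getElem l 0 hlpos]; exact List.getElem_mem _
  have h₀ := hbnd l₀ hmem₀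
  have iter : ∀ k, k < n → (σ ^ k) l₀ = l.getD k 0 := by
    intro k
    induction k with
    | zero => intro _; simp [hl₀]
    | succ k ih =>
      intro hk
      have h1 : (σ ^ (k+1)) l₀ = σ ((σ ^ k) l₀) := by rw [pow_succ']; rfl
      rw [h1, ih (by omega), hfwd k (by omega)]
  have getDmem : ∀ k, k < n → l.getD k 0 ∈ l := by
    intro k hk
    rw [List.getD_eq_getElem l 0 (by omega)]
    exact List.getElem_mem _
  have iterl : ∀ k, k < n → |(π ^ k) l₀| = l.getD k 0 := by
    intro k hk
    rw [absPow hπ habs k l₀, iter k hk]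
    exact abs_of_pos (by have := (hbnd _ (getDmem k hk)).1; omega)
  have hσn : (σ ^ n) l₀ = l₀ := by
    have h1 : (σ ^ n) l₀ = σ ((σ ^ (n-1)) l₀) := by
      conv_lhs => rw [show n = (n-1)+1 by omega]
      rw [pow_succ']; rfl
    rw [h1, iter (n-1) (by omega), hlast, one_mul]
  have hπn_abs : |(π ^ n) l₀| = l₀ := by
    rw [absPow hπ habs, hσn]
    exact abs_of_pos (by omega)
  have tel : ∀ m, m ≤ n → ((List.range m).map (fun k => Int.sign (π (l.getD k 0)))).prod
      = Int.sign ((π ^ m) l₀) := by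
    intro m
    induction m with
    | zero =>
      intro _
      simp [Int.sign_eq_one_of_pos (show (0:ℤ) < l₀ by omega)]
    | succ m ih =>
      intro hm
      rw [List.range_succ, List.map_append, List.prod_append, ih (by omega)]
      have hx : (π ^ m) l₀ ≠ 0 := by
        have h2 := iterl m (by omega)
        have h5 := (hbnd _ (getDmem m (by omega))).1
        intro h0
        rw [h0, abs_zero] at h2
        omega
      have hgd : l.getD m 0 = |(π ^ m) l₀| := (iterl m (by omega)).symm
      have h3 : (([m] : List ℕ).map (fun k => Int.sign (π (l.getD k 0)))).prod
          = Int.sign (π (l.getD m 0)) := by simp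
      rw [h3, hgd, sign_apply_abs hπ hx]
      have h1 : (π ^ (m+1)) l₀ = π ((π ^ m) l₀) := by rw [pow_succ']; rfl
      rw [h1, ← mul_assoc, sign_sq hx, one_mul]
  have hIccl : l.toFinset = Finset.Icc 1 (n:ℤ) := toFinset_eq_Icc hlen hbnd hnd
  have hprod : Int.sign ((π ^ n) l₀) = (-1:ℤ) ^ L.card := by
    have h1 := psi_piS ω hg
    rw [loopsList_length hω] at h1
    have h2 : (∏ i ∈ Finset.Icc (1:ℤ) (n:ℤ), Int.sign (π i))
        = ((List.range n).map (fun k => Int.sign (π (l.getD k 0)))).prod := by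
      rw [← hIccl, List.prod_toFinset _ hnd, ← hlen,
        map_getD_range l (fun i => Int.sign (π i))]
    rw [← tel n le_rfl, ← h2, h1]
  have hend : (π ^ n) l₀ = (-1:ℤ) ^ L.card * l₀ := sign_eps hπn_abs (by omega) hprod
  refine ⟨(List.range n).map (fun k => (π ^ k) l₀), by simp, ?_, ?_, ?_, hπ, ?_, ?_, ?_⟩
  · intro a ha
    simp only [List.mem_map, List.mem_range] at ha
    obtain ⟨k, hk, rfl⟩ := ha
    rw [iterl k hk]
    exact hbnd _ (getDmem k hk)
  · have heq : ((List.range n).map (fun k => (π ^ k) l₀)).map (fun a => |a|) = l := by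
      apply List.ext_getElem (by simp [hlen])
      intro k h1 h2
      simp only [List.getElem_map, List.getElem_range]
      have hk : k < n := by simpa using h1
      rw [← List.getD_eq_getElem l 0 h2]
      exact iterl k hk
    rw [heq]; exact hnd
  · intro h
    have := congrArg List.length h
    simp at this
    omega
  · intro k hk
    rw [List.length_map, List.length_range] at hk
    rw [getD_range_map n _ (show k < n by omega), getD_range_map n _ hk]
    rw [pow_succ']; rfl
  · have hlenl' : ((List.range n).map fun k => (π ^ k) l₀).length = n := by simp
    rw [hlenl', getD_range_map n _ (show n - 1 < n by omega),
      getD_range_map n _ (show 0 < n by omega)]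
    simp only [pow_zero, Equiv.Perm.one_apply]
    have h1 : π ((π ^ (n-1)) l₀) = (π ^ n) l₀ := by
      conv_rhs => rw [show n = (n-1)+1 by omega, pow_succ']
      rfl
    rw [h1, hend]
  · intro x hx
    have hIccx : ∀ i ∈ Finset.Icc (1:ℤ) (n:ℤ), |x| ≠ i := by
      intro i hi
      rw [← hIccl, List.mem_toFinset] at hi
      obtain ⟨k, hk, rfl⟩ := List.getElem_of_mem hi
      have hkn : k < n := by omega
      have hmem : (π ^ k) l₀ ∈ (List.range n).map (fun k => (π ^ k) l₀) := by
        simp only [List.mem_map, List.mem_range]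
        exact ⟨k, hkn, rfl⟩
      have h4 := hx _ hmem
      rw [iterl k hkn, List.getD_eq_getElem l 0 hk] at h4
      exact h4
    have hx1 : ¬(1 ≤ x ∧ x ≤ (n:ℤ)) := by
      intro h
      exact hIccx x (Finset.mem_Icc.mpr h) (abs_of_pos (by omega))
    have hx2 : ¬(1 ≤ -x ∧ -x ≤ (n:ℤ)) := by
      intro h
      exact hIccx (-x) (Finset.mem_Icc.mpr h) (abs_of_neg (by omega))
    exact piS_fixed ω hg hx1 hx2

/-- If `ω̄` is an edge ordering of the underlying unsigned multigraph of a signed graph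
`G = ([n], P, N, L)` with `π_{ω̄}` a full `n`-cycle in `S_n`, and `|L|` is even (resp. odd),
then every edge ordering `ω` of `G` whose restriction to non-loop edges is `ω̄` has `π_ω` an
even (resp. odd) full cyclic permutation of `H_n`. -/
theorem stmt12 (n : ℕ) (hn : 1 ≤ n) (P N : Finset (Fin n × Fin n)) (L : Finset (Fin n))
    (hP : ∀ p ∈ P, p.1 < p.2) (hN : ∀ p ∈ N, p.1 < p.2)
    (ωbar : List (EdgeU n)) (hbar : IsOrderingU P N ωbar)
    (hcyc : IsUnsignedFullCycle n (piU ωbar)) :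
    (Even L.card → ∀ ω : List (Edge n), IsOrdering P N L ω → deloop ω = ωbar →
      IsEvenFullCycle n (piS ω)) ∧
    (Odd L.card → ∀ ω : List (Edge n), IsOrdering P N L ω → deloop ω = ωbar →
      IsOddFullCycle n (piS ω)) := by
  constructor
  · intro he ω hω hdel
    obtain ⟨l', h1, h2, h3, h4⟩ := master n hn P N L hP hN ωbar hcyc ω hω hdel
    rw [he.neg_one_pow] at h4
    exact ⟨l', h1, h2, h3, h4⟩
  · intro he ω hω hdel
    obtain ⟨l', h1, h2, h3, h4⟩ := master n hn P N L hP hN ωbar hcyc ω hω hdel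
    rw [he.neg_one_pow] at h4
    exact ⟨l', h1, h2, h3, h4⟩
end Aux
end

section
/- A signed graph G on [n] has an edge ordering whose associated product is an even (resp. odd) full cyclic permutation in H_n if and only if its underlying unsigned multigraph has an edge ordering whose product is a full n-cycle in S_n and the number of loops of G is even (resp. odd). -/
namespace Aux13
open Equiv Finset
abbrev Nq (η : Equiv.Perm ℤ) : Prop := ∀ x : ℤ, η (-x) = -(η x)
abbrev Fx (n : ℕ) (η : Equiv.Perm ℤ) : Prop :=
  ∀ x : ℤ, (x = 0 ∨ (n:ℤ) < x ∨ x < -(n:ℤ)) → η x = x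

lemma Nq.zero {η} (h : Nq η) : η 0 = 0 := by
  have := h 0; simp only [neg_zero] at this; omega

lemma Nq.one : Nq 1 := fun x => rfl

lemma Nq.mul {η μ} (hη : Nq η) (hμ : Nq μ) : Nq (η * μ) := by
  intro x; simp only [Equiv.Perm.mul_apply, hμ x, hη]

lemma Nq.inv {η} (h : Nq η) : Nq η⁻¹ := by
  intro x; apply η.injective; simp [h]

lemma Nq.apply_ne_zero {η} (h : Nq η) {x : ℤ} (hx : x ≠ 0) : η x ≠ 0 :=
  fun h0 => hx (η.injective (h0.trans h.zero.symm))

lemma Nq.abs_eq {η} (h : Nq η) {x y : ℤ} (hxy : |x| = |y|) : |η x| = |η y| := by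
  rcases abs_eq_abs.mp hxy with rfl | rfl
  · rfl
  · rw [h y, abs_neg]

lemma Fx.one {n} : Fx n 1 := fun x _ => rfl

lemma Fx.mul {n} {η μ} (hη : Fx n η) (hμ : Fx n μ) : Fx n (η * μ) := by
  intro x hx; simp only [Equiv.Perm.mul_apply, hμ x hx, hη x hx]

lemma Fx.inv {n} {η} (h : Fx n η) : Fx n η⁻¹ := fun x hx =>
  η.injective (by rw [show η (η⁻¹ x) = x from (Equiv.eq_symm_apply _).mp rfl, h x hx])

lemma sT_one_apply (i j x : ℤ) (h1 : 1 ≤ i) (h2 : 1 ≤ j) :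
    sT 1 i j x = if x = i then j else if x = j then i else
      if x = -i then -j else if x = -j then -i else x := by
  simp only [sT, one_mul, Equiv.Perm.mul_apply, Equiv.swap_apply_def]
  split_ifs <;> omega

lemma sT_negone_apply (i j x : ℤ) (h1 : 1 ≤ i) (h2 : 1 ≤ j) (hij : i ≠ j) :
    sT (-1) i j x = if x = i then -j else if x = j then -i else
      if x = -i then j else if x = -j then i else x := by
  simp only [sT, neg_mul, one_mul, neg_neg, Equiv.Perm.mul_apply, Equiv.swap_apply_def]
  split_ifs <;> omega

lemma invT_apply (i x : ℤ) (h1 : 1 ≤ i) :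
    invT i x = if x = i then -i else if x = -i then i else x := by
  simp only [invT, Equiv.swap_apply_def]

def WF {n : ℕ} : Edge n → Prop
  | .inl (.inl (i, j)) => i ≠ j
  | .inl (.inr (i, j)) => i ≠ j
  | .inr _ => True

lemma vtx_one_le {n : ℕ} (v : Fin n) : 1 ≤ vtx v := by
  unfold vtx; omega

lemma vtx_le {n : ℕ} (v : Fin n) : vtx v ≤ (n : ℤ) := by
  have := v.isLt; unfold vtx; omega

lemma vtx_ne {n : ℕ} {v w : Fin n} (h : v ≠ w) : vtx v ≠ vtx w := by
  unfold vtx; intro hc; apply h; ext; omega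

lemma nq_tauS {n : ℕ} (e : Edge n) (hw : WF e) : Nq (tauS e) := by
  match e with
  | .inl (.inl (i, j)) =>
    intro x
    rw [show tauS (.inl (.inl (i,j))) = sT 1 (vtx i) (vtx j) from rfl]
    rw [sT_one_apply _ _ _ (vtx_one_le i) (vtx_one_le j),
        sT_one_apply _ _ _ (vtx_one_le i) (vtx_one_le j)]
    have := vtx_one_le i; have := vtx_one_le j
    split_ifs <;> omega
  | .inl (.inr (i, j)) =>
    intro x
    have hij := vtx_ne hw
    rw [show tauS (.inl (.inr (i,j))) = sT (-1) (vtx i) (vtx j) from rfl]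
    rw [sT_negone_apply _ _ _ (vtx_one_le i) (vtx_one_le j) hij,
        sT_negone_apply _ _ _ (vtx_one_le i) (vtx_one_le j) hij]
    have := vtx_one_le i; have := vtx_one_le j
    split_ifs <;> omega
  | .inr v =>
    intro x
    rw [show tauS (.inr v) = invT (vtx v) from rfl]
    rw [invT_apply _ _ (vtx_one_le v), invT_apply _ _ (vtx_one_le v)]
    have := vtx_one_le v
    split_ifs <;> omega

lemma fx_tauS {n : ℕ} (e : Edge n) (hw : WF e) : Fx n (tauS e) := by
  match e with
  | .inl (.inl (i, j)) =>
    intro x hx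
    rw [show tauS (.inl (.inl (i,j))) = sT 1 (vtx i) (vtx j) from rfl,
        sT_one_apply _ _ _ (vtx_one_le i) (vtx_one_le j)]
    have := vtx_one_le i; have := vtx_one_le j
    have := vtx_le i; have := vtx_le j
    split_ifs <;> omega
  | .inl (.inr (i, j)) =>
    intro x hx
    have hij := vtx_ne hw
    rw [show tauS (.inl (.inr (i,j))) = sT (-1) (vtx i) (vtx j) from rfl,
        sT_negone_apply _ _ _ (vtx_one_le i) (vtx_one_le j) hij]
    have := vtx_one_le i; have := vtx_one_le j
    have := vtx_le i; have := vtx_le j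
    split_ifs <;> omega
  | .inr v =>
    intro x hx
    rw [show tauS (.inr v) = invT (vtx v) from rfl,
        invT_apply _ _ (vtx_one_le v)]
    have := vtx_one_le v; have := vtx_le v
    split_ifs <;> omega

lemma sT1_nq {n : ℕ} (i j : Fin n) : Nq (sT 1 (vtx i) (vtx j)) := by
  intro x
  rw [sT_one_apply _ _ _ (vtx_one_le i) (vtx_one_le j),
      sT_one_apply _ _ _ (vtx_one_le i) (vtx_one_le j)]
  have := vtx_one_le i; have := vtx_one_le j
  split_ifs <;> omega

lemma sT1_fx {n : ℕ} (i j : Fin n) : Fx n (sT 1 (vtx i) (vtx j)) := by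
  intro x hx
  rw [sT_one_apply _ _ _ (vtx_one_le i) (vtx_one_le j)]
  have := vtx_one_le i; have := vtx_one_le j
  have := vtx_le i; have := vtx_le j
  split_ifs <;> omega

lemma sT1_pos {n : ℕ} (i j : Fin n) {x : ℤ} (hx : 0 < x) : 0 < sT 1 (vtx i) (vtx j) x := by
  rw [sT_one_apply _ _ _ (vtx_one_le i) (vtx_one_le j)]
  have := vtx_one_le i; have := vtx_one_le j
  split_ifs <;> omega

lemma nq_tauU {n : ℕ} (e : EdgeU n) : Nq (tauU e) := by
  match e with
  | .inl (i, j) => exact sT1_nq i j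
  | .inr (i, j) => exact sT1_nq i j

lemma fx_tauU {n : ℕ} (e : EdgeU n) : Fx n (tauU e) := by
  match e with
  | .inl (i, j) => exact sT1_fx i j
  | .inr (i, j) => exact sT1_fx i j

lemma tauU_pos {n : ℕ} (e : EdgeU n) {x : ℤ} (hx : 0 < x) : 0 < tauU e x := by
  match e with
  | .inl (i, j) => exact sT1_pos i j hx
  | .inr (i, j) => exact sT1_pos i j hx

lemma tauS_abs_tauU {n : ℕ} (e : EdgeU n) (hw : WF (.inl e)) (x : ℤ) :
    |tauS (.inl e) x| = |tauU e x| := by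
  match e with
  | .inl (i, j) => rfl
  | .inr (i, j) =>
    have hij := vtx_ne hw
    rw [show tauS (.inl (.inr (i,j))) = sT (-1) (vtx i) (vtx j) from rfl,
        show tauU (.inr (i,j)) = sT 1 (vtx i) (vtx j) from rfl,
        sT_negone_apply _ _ _ (vtx_one_le i) (vtx_one_le j) hij,
        sT_one_apply _ _ _ (vtx_one_le i) (vtx_one_le j)]
    split_ifs <;> simp [abs_neg]

lemma invT_cases {n : ℕ} (v : Fin n) (x : ℤ) :
    tauS (.inr v) x = x ∨ tauS (.inr v) x = -x := by
  rw [show tauS (.inr v) = invT (vtx v) from rfl, invT_apply _ _ (vtx_one_le v)]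
  split_ifs <;> omega

lemma piS_nil {n : ℕ} : piS ([] : List (Edge n)) = 1 := rfl

lemma piS_cons {n : ℕ} (e : Edge n) (ω : List (Edge n)) :
    piS (e :: ω) = piS ω * tauS e := by
  simp [piS, List.prod_append]

lemma piS_append {n : ℕ} (a b : List (Edge n)) : piS (a ++ b) = piS b * piS a := by
  simp [piS, List.prod_append]

lemma piU_cons {n : ℕ} (e : EdgeU n) (ω : List (EdgeU n)) :
    piU (e :: ω) = piU ω * tauU e := by
  simp [piU, List.prod_append]

lemma nq_piS {n : ℕ} (ω : List (Edge n)) (hw : ∀ e ∈ ω, WF e) : Nq (piS ω) := by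
  induction ω with
  | nil => exact Nq.one
  | cons e ω ih =>
    rw [piS_cons]
    exact (ih fun e' h => hw e' (List.mem_cons_of_mem _ h)).mul
      (nq_tauS e (hw e (List.mem_cons_self)))

lemma fx_piS {n : ℕ} (ω : List (Edge n)) (hw : ∀ e ∈ ω, WF e) : Fx n (piS ω) := by
  induction ω with
  | nil => exact Fx.one
  | cons e ω ih =>
    rw [piS_cons]
    exact (ih fun e' h => hw e' (List.mem_cons_of_mem _ h)).mul
      (fx_tauS e (hw e (List.mem_cons_self)))

lemma nq_piU {n : ℕ} (ω : List (EdgeU n)) : Nq (piU ω) := by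
  induction ω with
  | nil => exact Nq.one
  | cons e ω ih => rw [piU_cons]; exact ih.mul (nq_tauU e)

def sgnu (x : ℤ) : ℤˣ := if x < 0 then -1 else 1

lemma sgnu_of_pos {x : ℤ} (h : 0 < x) : sgnu x = 1 := if_neg (by omega)

lemma sgnu_of_neg {x : ℤ} (h : x < 0) : sgnu x = -1 := if_pos h

lemma sgnu_neg {x : ℤ} (hx : x ≠ 0) : sgnu (-x) = -sgnu x := by
  unfold sgnu
  split_ifs <;> first | decide | (exfalso; omega)

lemma sgnu_unit_mul (u : ℤˣ) {x : ℤ} (hx : x ≠ 0) : sgnu ((u : ℤ) * x) = u * sgnu x := by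
  rcases Int.units_eq_one_or u with rfl | rfl
  · simp
  · push_cast
    rw [neg_one_mul, sgnu_neg hx, neg_one_mul]

lemma sgnu_apply_abs {η : Equiv.Perm ℤ} (h : Nq η) {x : ℤ} (hx : x ≠ 0) :
    sgnu (η |x|) = sgnu x * sgnu (η x) := by
  rcases hx.lt_or_gt with hneg | hpos
  · rw [abs_of_neg hneg, h, sgnu_neg (h.apply_ne_zero hx), sgnu_of_neg hneg, neg_one_mul]
  · rw [abs_of_pos hpos, sgnu_of_pos hpos, one_mul]

noncomputable def chiu (n : ℕ) (η : Equiv.Perm ℤ) : ℤˣ := ∏ i ∈ Finset.Icc (1 : ℤ) (n : ℤ), sgnu (η i)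

lemma nq_fx_bound {n : ℕ} {μ : Equiv.Perm ℤ} (hμ : Nq μ) (hf : Fx n μ) {x : ℤ}
    (h1 : 1 ≤ x) (h2 : x ≤ (n : ℤ)) : 1 ≤ |μ x| ∧ |μ x| ≤ (n : ℤ) := by
  have hz : μ x ≠ 0 := hμ.apply_ne_zero (by omega)
  have key : ¬ ((n : ℤ) < μ x ∨ μ x < -(n : ℤ)) := by
    intro hy
    have := μ.injective (hf (μ x) (Or.inr hy))
    omega
  rcases le_or_gt 0 (μ x) with h | h
  · rw [abs_of_nonneg h]; omega
  · rw [abs_of_neg h]; omega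

lemma chiu_mul (n : ℕ) {η μ : Equiv.Perm ℤ} (hη : Nq η) (hηf : Fx n η)
    (hμ : Nq μ) (hμf : Fx n μ) : chiu n (η * μ) = chiu n η * chiu n μ := by
  unfold chiu
  have key : ∀ k ∈ Finset.Icc (1:ℤ) (n:ℤ), sgnu ((η * μ) k) = sgnu (μ k) * sgnu (η (|μ k|)) := by
    intro k hk
    simp only [Finset.mem_Icc] at hk
    have hkz : k ≠ 0 := by omega
    rw [Equiv.Perm.mul_apply, sgnu_apply_abs hη (hμ.apply_ne_zero hkz), ← mul_assoc,
        Int.units_mul_self, one_mul]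
  rw [Finset.prod_congr rfl key, Finset.prod_mul_distrib, mul_comm]
  congr 1
  refine Finset.prod_nbij' (fun k => |μ k|) (fun k => |μ⁻¹ k|) ?_ ?_ ?_ ?_ ?_
  · intro a ha
    simp only [Finset.mem_Icc] at ha ⊢
    exact nq_fx_bound hμ hμf ha.1 ha.2
  · intro a ha
    simp only [Finset.mem_Icc] at ha ⊢
    exact nq_fx_bound hμ.inv hμf.inv ha.1 ha.2
  · intro a ha
    simp only [Finset.mem_Icc] at ha
    show abs (μ⁻¹ (abs (μ a))) = a
    rw [hμ.inv.abs_eq (abs_abs (μ a)), (show μ⁻¹ (μ a) = a from Equiv.Perm.inv_eq_iff_eq.mpr rfl), abs_of_pos (by omega)]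
  · intro a ha
    simp only [Finset.mem_Icc] at ha
    show abs (μ (abs (μ⁻¹ a))) = a
    rw [hμ.abs_eq (abs_abs (μ⁻¹ a)), (show μ (μ⁻¹ a) = a from (Equiv.eq_symm_apply _).mp rfl), abs_of_pos (by omega)]
  · intro a _; rfl

lemma chiu_one (n : ℕ) : chiu n 1 = 1 := by
  unfold chiu
  refine Finset.prod_eq_one fun k hk => ?_
  simp only [Finset.mem_Icc] at hk
  rw [Equiv.Perm.one_apply, sgnu_of_pos (by omega)]

lemma chiu_tauS_posedge {n : ℕ} (i j : Fin n) :
    chiu n (sT 1 (vtx i) (vtx j)) = 1 := by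
  unfold chiu
  refine Finset.prod_eq_one fun k hk => ?_
  simp only [Finset.mem_Icc] at hk
  exact sgnu_of_pos (sT1_pos i j (by omega))

lemma chiu_tauS_negedge {n : ℕ} (i j : Fin n) (hij : i ≠ j) :
    chiu n (sT (-1) (vtx i) (vtx j)) = 1 := by
  unfold chiu
  have hvij := vtx_ne hij
  have h1 := vtx_one_le i; have h2 := vtx_one_le j
  have h3 := vtx_le i; have h4 := vtx_le j
  have key : ∀ k ∈ Finset.Icc (1:ℤ) (n:ℤ), sgnu (sT (-1) (vtx i) (vtx j) k) =
      (if k = vtx i then (-1 : ℤˣ) else 1) * (if k = vtx j then (-1 : ℤˣ) else 1) := by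
    intro k hk
    simp only [Finset.mem_Icc] at hk
    rw [sT_negone_apply _ _ _ h1 h2 hvij]
    unfold sgnu
    split_ifs <;> first | decide | (exfalso; omega)
  rw [Finset.prod_congr rfl key, Finset.prod_mul_distrib,
      Finset.prod_ite_eq' _ _ (fun _ => (-1 : ℤˣ)),
      Finset.prod_ite_eq' _ _ (fun _ => (-1 : ℤˣ)),
      if_pos (by simp only [Finset.mem_Icc]; omega),
      if_pos (by simp only [Finset.mem_Icc]; omega)]
  decide

lemma chiu_tauS_loop {n : ℕ} (v : Fin n) : chiu n (invT (vtx v)) = -1 := by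
  unfold chiu
  have h1 := vtx_one_le v; have h3 := vtx_le v
  have key : ∀ k ∈ Finset.Icc (1:ℤ) (n:ℤ), sgnu (invT (vtx v) k) =
      (if k = vtx v then (-1 : ℤˣ) else 1) := by
    intro k hk
    simp only [Finset.mem_Icc] at hk
    rw [invT_apply _ _ h1]
    unfold sgnu
    split_ifs <;> first | decide | (exfalso; omega)
  rw [Finset.prod_congr rfl key, Finset.prod_ite_eq' _ _ (fun _ => (-1 : ℤˣ)),
      if_pos (by simp only [Finset.mem_Icc]; omega)]

def loopCount {n : ℕ} (ω : List (Edge n)) : ℕ :=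
  (ω.filterMap (Sum.elim (fun _ => none) some)).length

lemma chiu_piS {n : ℕ} (ω : List (Edge n)) (hw : ∀ e ∈ ω, WF e) :
    chiu n (piS ω) = (-1) ^ loopCount ω := by
  induction ω with
  | nil => simpa [loopCount, piS_nil] using chiu_one n
  | cons e ω ih =>
    have hwω : ∀ e' ∈ ω, WF e' := fun e' h => hw e' (List.mem_cons_of_mem _ h)
    have hwe : WF e := hw e (List.mem_cons_self)
    rw [piS_cons, chiu_mul n (nq_piS ω hwω) (fx_piS ω hwω) (nq_tauS e hwe) (fx_tauS e hwe),
        ih hwω]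
    match e with
    | .inl (.inl (i, j)) =>
      rw [show tauS (.inl (.inl (i,j))) = sT 1 (vtx i) (vtx j) from rfl,
          chiu_tauS_posedge, mul_one]
      simp [loopCount, List.filterMap_cons]
    | .inl (.inr (i, j)) =>
      rw [show tauS (.inl (.inr (i,j))) = sT (-1) (vtx i) (vtx j) from rfl,
          chiu_tauS_negedge i j hwe, mul_one]
      simp [loopCount, List.filterMap_cons]
    | .inr v =>
      rw [show tauS (.inr v) = invT (vtx v) from rfl, chiu_tauS_loop]
      simp only [loopCount, List.filterMap_cons, Sum.elim_inr, List.length_cons, pow_succ]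

lemma wf_of_ordering {n : ℕ} {P N : Finset (Fin n × Fin n)} {L : Finset (Fin n)}
    {ω : List (Edge n)} (hord : IsOrdering P N L ω)
    (hP : ∀ p ∈ P, p.1 < p.2) (hN : ∀ p ∈ N, p.1 < p.2) : ∀ e ∈ ω, WF e := by
  intro e he
  have := (hord.2 e).mp he
  match e with
  | .inl (.inl (i, j)) =>
    simp only [Sum.elim_inl] at this
    exact ne_of_lt (hP _ this)
  | .inl (.inr (i, j)) =>
    simp only [Sum.elim_inl, Sum.elim_inr] at this
    exact ne_of_lt (hN _ this)
  | .inr v => trivial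

lemma getD_mem {l : List ℤ} {k : ℕ} (h : k < l.length) : l.getD k 0 ∈ l := by
  rw [List.getD_eq_getElem _ _ h]; exact List.getElem_mem _

lemma getD_abs (l : List ℤ) {k : ℕ} (h : k < l.length) :
    (l.map fun a => |a|).getD k 0 = |l.getD k 0| := by
  rw [List.getD_eq_getElem _ _ (by simpa using h), List.getD_eq_getElem _ _ h,
      List.getElem_map]

lemma exhaust {n : ℕ} {l : List ℤ} (hlen : l.length = n) (hnd : l.Nodup)
    (hbd : ∀ a ∈ l, 1 ≤ a ∧ a ≤ (n:ℤ)) {m : ℤ} (h1 : 1 ≤ m) (h2 : m ≤ (n:ℤ)) : m ∈ l := by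
  have hsub : l.toFinset ⊆ Finset.Icc 1 (n:ℤ) := by
    intro a ha
    simp only [List.mem_toFinset] at ha
    simp only [Finset.mem_Icc]
    exact hbd a ha
  have hcard : (Finset.Icc (1:ℤ) (n:ℤ)).card ≤ l.toFinset.card := by
    rw [Int.card_Icc, List.toFinset_card_of_nodup hnd, hlen]
    simp
  have heq := Finset.eq_of_subset_of_card_le hsub hcard
  have : m ∈ l.toFinset := by rw [heq]; simp only [Finset.mem_Icc]; omega
  simpa using this

lemma chiu_cycle {n : ℕ} (hn : 1 ≤ n) {η : Equiv.Perm ℤ} {l : List ℤ} (εu : ℤˣ)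
    (hlen : l.length = n) (hbd : ∀ a ∈ l, 1 ≤ |a| ∧ |a| ≤ (n:ℤ))
    (hnd : (l.map fun a => |a|).Nodup) (hc : IsSignedCycle η l (εu : ℤ)) :
    chiu n η = εu := by
  obtain ⟨hne, hnq, hstep, hwrap, hfix⟩ := hc
  have hn0 : 0 < n := hn
  set f : Fin n → ℤ := fun k => l.getD (k : ℕ) 0 with hf
  have hkl : ∀ k : Fin n, (k : ℕ) < l.length := fun k => by rw [hlen]; exact k.isLt
  have hmem : ∀ k : Fin n, f k ∈ l := fun k => getD_mem (hkl k)
  have hfb : ∀ k : Fin n, 1 ≤ |f k| ∧ |f k| ≤ (n:ℤ) := fun k => hbd _ (hmem k)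
  have hfz : ∀ k : Fin n, f k ≠ 0 := by
    intro k h
    have := hfb k
    rw [h] at this
    simp at this
  have hinj : ∀ a b : Fin n, |f a| = |f b| → a = b := by
    intro a b hab
    have ha := hkl a; have hb := hkl b
    have hceq : (l.map fun x => |x|)[(a:ℕ)]'(by simpa using ha) =
        (l.map fun x => |x|)[(b:ℕ)]'(by simpa using hb) := by
      simp only [List.getElem_map]
      rw [← List.getD_eq_getElem _ 0 ha, ← List.getD_eq_getElem _ 0 hb]
      exact hab
    exact Fin.ext (hnd.getElem_inj_iff.mp hceq)
  have himg : Finset.image (fun k : Fin n => |f k|) Finset.univ = Finset.Icc (1:ℤ) (n:ℤ) := by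
    apply Finset.eq_of_subset_of_card_le
    · intro x hx
      simp only [Finset.mem_image] at hx
      obtain ⟨k, _, rfl⟩ := hx
      simp only [Finset.mem_Icc]
      exact hfb k
    · rw [Int.card_Icc, Finset.card_image_of_injective _ (fun a b hab => hinj a b hab)]
      simp
  have hchiu : chiu n η = ∏ k : Fin n, sgnu (η |f k|) := by
    unfold chiu
    rw [← himg, Finset.prod_image (fun a _ b _ hab => hinj a b hab)]
  set nxt : Fin n → Fin n := fun k => ⟨((k:ℕ) + 1) % n, Nat.mod_lt _ hn0⟩ with hnxt
  have hmod : ∀ m : ℕ, m < n → (m + 1) % n = if m + 1 = n then 0 else m + 1 := by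
    intro m hm
    split_ifs with h
    · rw [h, Nat.mod_self]
    · exact Nat.mod_eq_of_lt (by omega)
  have hnxtinj : Function.Injective nxt := by
    intro a b hab
    have hv : ((a:ℕ)+1) % n = ((b:ℕ)+1) % n := congrArg Fin.val hab
    have hal := a.isLt; have hbl := b.isLt
    rw [hmod _ a.isLt, hmod _ b.isLt] at hv
    apply Fin.ext
    split_ifs at hv <;> omega
  have hnxtbij : Function.Bijective nxt := Finite.injective_iff_bijective.mp hnxtinj
  have key : ∀ k : Fin n, sgnu (η |f k|) =
      (sgnu (f k) * sgnu (f (nxt k))) * (if k = (⟨n - 1, by omega⟩ : Fin n) then εu else 1) := by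
    intro k
    rw [sgnu_apply_abs hnq (hfz k)]
    by_cases hk : (k:ℕ) = n - 1
    · have hkeq : k = (⟨n - 1, by omega⟩ : Fin n) := Fin.ext hk
      have hnxt0 : nxt k = ⟨0, hn0⟩ := by
        apply Fin.ext
        show ((k:ℕ)+1) % n = 0
        rw [hmod _ k.isLt, if_pos (by omega)]
      have hwrap' : η (f k) = (εu:ℤ) * f (nxt k) := by
        rw [hnxt0]
        show η (l.getD (k:ℕ) 0) = (εu:ℤ) * l.getD 0 0
        rw [hk, ← hlen]
        exact hwrap
      rw [hwrap', sgnu_unit_mul εu (by rw [hnxt0]; exact hfz _), if_pos hkeq]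
      simp [mul_comm, mul_left_comm, mul_assoc]
    · have hkl' := k.isLt
      have hk1 : (k:ℕ) + 1 < n := by omega
      have hnxtv : ((nxt k) : ℕ) = (k:ℕ) + 1 := by
        show ((k:ℕ)+1) % n = (k:ℕ) + 1
        rw [hmod _ k.isLt, if_neg (by omega)]
      have hstep' : η (f k) = f (nxt k) := by
        show η (l.getD (k:ℕ) 0) = l.getD ((nxt k : Fin n) : ℕ) 0
        rw [hnxtv]
        exact hstep (k:ℕ) (by rw [hlen]; exact hk1)
      rw [hstep', if_neg (fun hc => hk (by rw [hc]))]
      rw [mul_one]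
  rw [hchiu, Finset.prod_congr rfl (fun k _ => key k), Finset.prod_mul_distrib,
      Finset.prod_mul_distrib]
  have h1 : ∏ k : Fin n, sgnu (f (nxt k)) = ∏ k : Fin n, sgnu (f k) :=
    Fintype.prod_bijective nxt hnxtbij _ _ (fun k => rfl)
  have h2 : (∏ k : Fin n, if k = (⟨n - 1, by omega⟩ : Fin n) then εu else (1:ℤˣ)) = εu := by
    rw [Finset.prod_ite_eq' Finset.univ _ (fun _ => εu), if_pos (Finset.mem_univ _)]
  rw [h1, h2, Int.units_mul_self, one_mul]

lemma piU_deloop_abs {n : ℕ} (ω : List (Edge n)) (hw : ∀ e ∈ ω, WF e) :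
    ∀ x : ℤ, 0 < x → piU (deloop ω) x = |piS ω x| := by
  induction ω with
  | nil =>
    intro x hx
    simp [piS, piU, deloop, abs_of_pos hx]
  | cons e ω ih =>
    have hwω : ∀ e' ∈ ω, WF e' := fun e' h => hw e' (List.mem_cons_of_mem _ h)
    have hnq := nq_piS ω hwω
    intro x hx
    rw [piS_cons, Equiv.Perm.mul_apply]
    match e with
    | .inr v =>
      have hdl : deloop (.inr v :: ω) = deloop ω := by rfl
      have habs : |tauS (Sum.inr v) x| = |x| := by
        rcases invT_cases v x with h | h <;> rw [h]
        rw [abs_neg]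
      rw [hdl, hnq.abs_eq habs, ih hwω x hx]
    | .inl e' =>
      have hdl : deloop (.inl e' :: ω) = e' :: deloop ω := by simp [deloop]
      have hwf : WF (Sum.inl e') := hw _ (List.mem_cons_self)
      have hpos : 0 < tauU e' x := tauU_pos e' hx
      rw [hdl, piU_cons, Equiv.Perm.mul_apply, ih hwω _ hpos,
          hnq.abs_eq (tauS_abs_tauU e' hwf x)]

lemma loopCount_eq {n : ℕ} {P N : Finset (Fin n × Fin n)} {L : Finset (Fin n)}
    {ω : List (Edge n)} (hord : IsOrdering P N L ω) : loopCount ω = L.card := by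
  set lst : List (Fin n) := ω.filterMap (Sum.elim (fun _ => none) some) with hlst
  have hmem : ∀ v : Fin n, v ∈ lst ↔ v ∈ L := by
    intro v
    rw [hlst, List.mem_filterMap]
    constructor
    · rintro ⟨a, ha, hev⟩
      cases a with
      | inl w => simp at hev
      | inr w =>
        simp only [Sum.elim_inr, Option.some.injEq] at hev
        subst hev
        simpa using (hord.2 (Sum.inr w)).mp ha
    · intro hv
      exact ⟨Sum.inr v, (hord.2 (Sum.inr v)).mpr (by simpa using hv), rfl⟩
  have hnd : lst.Nodup := by
    refine List.Nodup.filterMap ?_ hord.1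
    intro a a' b hb hb'
    match a, a' with
    | .inl _, _ => simp at hb
    | _, .inl _ => simp at hb'
    | .inr w, .inr w' =>
      simp only [Sum.elim_inr, Option.mem_def, Option.some.injEq] at hb hb'
      rw [hb, hb']
  have hfin : lst.toFinset = L := by
    ext v
    simp [hmem v]
  rw [show loopCount ω = lst.length from rfl, ← List.toFinset_card_of_nodup hnd, hfin]

lemma deloop_ordering {n : ℕ} {P N : Finset (Fin n × Fin n)} {L : Finset (Fin n)}
    {ω : List (Edge n)} (hord : IsOrdering P N L ω) : IsOrderingU P N (deloop ω) := by
  constructor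
  · refine List.Nodup.filterMap ?_ hord.1
    intro a a' b hb hb'
    match a, a' with
    | .inr _, _ => simp at hb
    | _, .inr _ => simp at hb'
    | .inl w, .inl w' =>
      simp only [Sum.elim_inl, Option.mem_def, Option.some.injEq] at hb hb'
      rw [hb, hb']
  · intro e
    rw [deloop, List.mem_filterMap]
    constructor
    · rintro ⟨a, ha, hev⟩
      cases a with
      | inr w => simp at hev
      | inl w =>
        simp only [Sum.elim_inl, Option.some.injEq] at hev
        subst hev
        exact (hord.2 (Sum.inl w)).mp ha
    · intro he
      exact ⟨Sum.inl e, (hord.2 (Sum.inl e)).mpr he, rfl⟩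

lemma forward {n : ℕ} (hn : 1 ≤ n) {P N : Finset (Fin n × Fin n)} {L : Finset (Fin n)}
    (hP : ∀ p ∈ P, p.1 < p.2) (hN : ∀ p ∈ N, p.1 < p.2)
    {ω : List (Edge n)} (hord : IsOrdering P N L ω) (εu : ℤˣ)
    {l : List ℤ} (hlen : l.length = n)
    (hbd : ∀ a ∈ l, 1 ≤ |a| ∧ |a| ≤ (n : ℤ)) (hnd : (l.map fun a => |a|).Nodup)
    (hc : IsSignedCycle (piS ω) l (εu : ℤ)) :
    (IsOrderingU P N (deloop ω) ∧ IsUnsignedFullCycle n (piU (deloop ω))) ∧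
      (-1 : ℤˣ) ^ L.card = εu := by
  have hw := wf_of_ordering hord hP hN
  have key := piU_deloop_abs ω hw
  obtain ⟨hne, hnq, hstep, hwrap, hfix⟩ := hc
  have hnqU := nq_piU (deloop ω)
  have hlpos : 0 < l.length := List.length_pos_iff.mpr hne
  refine ⟨⟨deloop_ordering hord, ?_⟩, ?_⟩
  · refine ⟨l.map fun a => |a|, by simpa using hlen, ?_, hnd, ?_, hnqU, ?_, ?_, ?_⟩
    · intro a ha
      simp only [List.mem_map] at ha
      obtain ⟨b, hb, rfl⟩ := ha
      exact hbd b hb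
    · simpa using hne
    · -- step
      intro k hk
      simp only [List.length_map] at hk
      have hk' : k < l.length := by omega
      have hk1 : k + 1 < l.length := by omega
      rw [getD_abs l hk', getD_abs l hk1]
      have h1 : 1 ≤ |l.getD k 0| := (hbd _ (getD_mem hk')).1
      rw [key _ (by omega), Nq.abs_eq hnq (abs_abs (l.getD k 0)), hstep k hk1]
    · -- wrap
      simp only [List.length_map]
      have hl1 : l.length - 1 < l.length := by omega
      rw [getD_abs l hl1, getD_abs l hlpos]
      have h1 : 1 ≤ |l.getD (l.length - 1) 0| := (hbd _ (getD_mem hl1)).1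
      rw [key _ (by omega), Nq.abs_eq hnq (abs_abs (l.getD (l.length - 1) 0)), hwrap, one_mul]
      rcases Int.units_eq_one_or εu with h | h <;> rw [h] <;> simp
    · -- fix
      intro x hx
      have hx' : ∀ b ∈ l, |x| ≠ |b| := by
        intro b hb
        have := hx |b| (List.mem_map.mpr ⟨b, hb, rfl⟩)
        simpa using this
      have hfx : piS ω x = x := hfix x hx'
      rcases lt_trichotomy x 0 with hneg | rfl | hpos
      · have hfx' : piS ω (-x) = -x := hfix (-x) (by intro b hb; rw [abs_neg]; exact hx' b hb)
        have : piU (deloop ω) (-x) = -x := by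
          rw [key (-x) (by omega), hfx', abs_of_pos (by omega)]
        have h2 := hnqU x
        omega
      · exact hnqU.zero
      · rw [key x hpos, hfx, abs_of_pos hpos]
  · rw [← chiu_cycle hn εu hlen hbd hnd ⟨hne, hnq, hstep, hwrap, hfix⟩,
        chiu_piS ω hw, loopCount_eq hord]

lemma reverse {n : ℕ} (hn : 1 ≤ n) {P N : Finset (Fin n × Fin n)} {L : Finset (Fin n)}
    (hP : ∀ p ∈ P, p.1 < p.2) (hN : ∀ p ∈ N, p.1 < p.2)
    {ωbar : List (EdgeU n)} (hord : IsOrderingU P N ωbar)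
    (hcyc : IsUnsignedFullCycle n (piU ωbar)) :
    ∃ ω : List (Edge n), IsOrdering P N L ω ∧
      ∃ l' : List ℤ, l'.length = n ∧ (∀ a ∈ l', 1 ≤ |a| ∧ |a| ≤ (n:ℤ)) ∧
        (l'.map fun a => |a|).Nodup ∧
        IsSignedCycle (piS ω) l' (((-1 : ℤˣ) ^ L.card : ℤˣ) : ℤ) := by
  classical
  set ω : List (Edge n) := ωbar.map Sum.inl ++ L.toList.map Sum.inr with hω
  have hordS : IsOrdering P N L ω := by
    constructor
    · refine List.Nodup.append ?_ ?_ ?_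
      · exact hord.1.map Sum.inl_injective
      · exact (L.nodup_toList).map Sum.inr_injective
      · intro a ha hb
        simp only [List.mem_map] at ha hb
        obtain ⟨x, _, rfl⟩ := ha
        obtain ⟨y, _, h⟩ := hb
        cases h
    · intro e
      cases e with
      | inl e' =>
        simp only [hω, List.mem_append, List.mem_map, Sum.elim_inl]
        rw [← hord.2 e']
        constructor
        · rintro (⟨x, hx, hxe⟩ | ⟨x, _, hxe⟩)
          · rwa [← Sum.inl_injective hxe]
          · cases hxe
        · intro h; exact Or.inl ⟨e', h, rfl⟩
      | inr v =>
        simp only [hω, List.mem_append, List.mem_map, Sum.elim_inr]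
        constructor
        · rintro (⟨x, _, hxe⟩ | ⟨x, hx, hxe⟩)
          · cases hxe
          · rw [← Sum.inr_injective hxe]; simpa using hx
        · intro h; exact Or.inr ⟨v, by simpa using h, rfl⟩
  have hw := wf_of_ordering hordS hP hN
  have hdl : deloop ω = ωbar := by
    rw [hω, deloop, List.filterMap_append, List.filterMap_map, List.filterMap_map]
    have e1 : (Sum.elim some (fun _ => none : Fin n → Option (EdgeU n))) ∘ Sum.inl
        = some := rfl
    have e2 : (Sum.elim some (fun _ => none : Fin n → Option (EdgeU n))) ∘ Sum.inr
        = fun _ => none := rfl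
    rw [e1, e2, List.filterMap_some]
    simp
  set η := piS ω with hη
  have hnq : Nq η := nq_piS ω hw
  have hfx : Fx n η := fx_piS ω hw
  have key : ∀ x : ℤ, 0 < x → piU ωbar x = |η x| := by
    intro x hx
    rw [← hdl]
    exact piU_deloop_abs ω hw x hx
  obtain ⟨l, hlen, hbd, hnd, hne, hnqσ, hstep, hwrap, hfixσ⟩ := hcyc
  have hstepn : ∀ k : ℕ, k + 1 < n → piU ωbar (l.getD k 0) = l.getD (k+1) 0 := by
    intro k hk; exact hstep k (by omega)
  have hwrapn : piU ωbar (l.getD (n-1) 0) = l.getD 0 0 := by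
    have := hwrap
    rw [hlen] at this
    rw [this, one_mul]
  set l₀ : ℤ := l.getD 0 0 with hl0
  have hlpos : 0 < l.length := by omega
  have h0mem : l₀ ∈ l := getD_mem hlpos
  have h0bd := hbd _ h0mem
  have habs : ∀ k : ℕ, k < n → |(η ^ k) l₀| = l.getD k 0 := by
    intro k
    induction k with
    | zero =>
      intro _
      rw [pow_zero, Equiv.Perm.one_apply]
      exact abs_of_pos (by omega : (0:ℤ) < l₀)
    | succ k ih =>
      intro hk1
      have hk : k < n := by omega
      have hbk := hbd _ (getD_mem (show k < l.length by omega))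
      have h1 : |η ((η ^ k) l₀)| = |η (l.getD k 0)| :=
        hnq.abs_eq (by rw [ih hk, abs_of_pos (by omega : (0:ℤ) < l.getD k 0)])
      rw [pow_succ', Equiv.Perm.mul_apply, h1, ← key (l.getD k 0) (by omega), hstepn k hk1]
  have hbn1 := hbd _ (getD_mem (show n - 1 < l.length by omega))
  have hn' : n - 1 + 1 = n := by omega
  have hpown : (η ^ n) l₀ = η ((η ^ (n-1)) l₀) := by
    conv_lhs => rw [← hn']
    rw [pow_succ', Equiv.Perm.mul_apply]
  have hwrapabs : |(η ^ n) l₀| = l₀ := by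
    have h1 : |η ((η ^ (n-1)) l₀)| = |η (l.getD (n-1) 0)| :=
      hnq.abs_eq (by rw [habs (n-1) (by omega), abs_of_pos (by omega : (0:ℤ) < l.getD (n-1) 0)])
    rw [hpown, h1, ← key (l.getD (n-1) 0) (by omega), hwrapn]
  set δ : ℤˣ := if (η ^ n) l₀ = l₀ then 1 else -1 with hδ
  have hδeq : (η ^ n) l₀ = (δ:ℤ) * l₀ := by
    rw [hδ]
    split_ifs with h
    · simpa using h
    · rcases (abs_eq (by omega : (0:ℤ) ≤ l₀)).mp hwrapabs with h' | h'
      · exact absurd h' h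
      · simpa using h'
  set g : Fin n → ℤ := fun k => (η ^ (k:ℕ)) l₀ with hg
  set l' : List ℤ := List.ofFn g with hl'
  have hlen' : l'.length = n := by simp [hl']
  have hget : ∀ (k : ℕ), k < n → l'.getD k 0 = (η ^ k) l₀ := by
    intro k hk
    rw [List.getD_eq_getElem _ _ (by rw [hlen']; omega)]
    simp [hl', hg]
  have habs' : ∀ k : Fin n, |g k| = l.getD (k:ℕ) 0 := fun k => habs _ k.isLt
  have hmapeq : l'.map (fun a => |a|) = l := by
    apply List.ext_getElem
    · simp [hlen', hlen]
    · intro i h1 h2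
      simp only [List.getElem_map]
      have hi : i < n := by rw [← hlen]; exact h2
      rw [← List.getD_eq_getElem l' 0 (by rw [hlen']; exact hi), hget i hi,
          ← List.getD_eq_getElem l 0 h2]
      exact habs i hi
  have hbd' : ∀ a ∈ l', 1 ≤ |a| ∧ |a| ≤ (n:ℤ) := by
    intro a ha
    have : |a| ∈ l := by
      rw [← hmapeq]
      exact List.mem_map.mpr ⟨a, ha, rfl⟩
    exact hbd _ this
  have hnd' : (l'.map fun a => |a|).Nodup := by rw [hmapeq]; exact hnd
  have hcyc' : IsSignedCycle η l' ((δ : ℤ)) := by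
    refine ⟨?_, hnq, ?_, ?_, ?_⟩
    · rw [← List.length_pos_iff, hlen']; omega
    · intro k hk
      rw [hlen'] at hk
      rw [hget k (by omega), hget (k+1) hk, pow_succ', Equiv.Perm.mul_apply]
    · rw [hlen', hget (n-1) (by omega), hget 0 (by omega), pow_zero]
      rw [← hpown]
      simpa using hδeq
    · intro x hx
      have hxl : ∀ b ∈ l, |x| ≠ b := by
        intro b hb
        rw [← hmapeq] at hb
        obtain ⟨a, ha, rfl⟩ := List.mem_map.mp hb
        exact hx a ha
      have hout : x = 0 ∨ (n:ℤ) < x ∨ x < -(n:ℤ) := by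
        by_contra hcon
        push_neg at hcon
        have hin : 1 ≤ |x| ∧ |x| ≤ (n:ℤ) := by
          rcases le_or_gt 0 x with h | h
          · rw [abs_of_nonneg h]; omega
          · rw [abs_of_neg h]; omega
        exact hxl |x| (exhaust hlen hnd hbd hin.1 hin.2) rfl
      exact hfx x hout
  have hδval : δ = (-1 : ℤˣ) ^ L.card := by
    have h1 : chiu n η = δ := chiu_cycle hn δ hlen' hbd' hnd' hcyc'
    have h2 : chiu n η = (-1 : ℤˣ) ^ loopCount ω := chiu_piS ω hw
    rw [← h1, h2, loopCount_eq hordS]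
  exact ⟨ω, hordS, l', hlen', hbd', hnd', by rw [← hδval]; exact hcyc'⟩

end Aux13

/-- A signed graph `G = ([n], P, N, L)` has an edge ordering whose product is an even
(resp. odd) full cyclic permutation of `H_n` if and only if its underlying unsigned multigraph
has an edge ordering whose product is a full `n`-cycle of `S_n` and `|L|` is even (resp. odd). -/
theorem stmt13 (n : ℕ) (hn : 1 ≤ n) (P N : Finset (Fin n × Fin n)) (L : Finset (Fin n))
    (hP : ∀ p ∈ P, p.1 < p.2) (hN : ∀ p ∈ N, p.1 < p.2) :
    ((∃ ω : List (Edge n), IsOrdering P N L ω ∧ IsEvenFullCycle n (piS ω)) ↔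
      ((∃ ωbar : List (EdgeU n), IsOrderingU P N ωbar ∧ IsUnsignedFullCycle n (piU ωbar)) ∧
        Even L.card)) ∧
    ((∃ ω : List (Edge n), IsOrdering P N L ω ∧ IsOddFullCycle n (piS ω)) ↔
      ((∃ ωbar : List (EdgeU n), IsOrderingU P N ωbar ∧ IsUnsignedFullCycle n (piU ωbar)) ∧
        Odd L.card)) := by
  constructor
  · constructor
    · rintro ⟨ω, hord, l, hlen, hbd, hnd, hc⟩
      have hc' : IsSignedCycle (piS ω) l (((1:ℤˣ) : ℤ)) := by simpa using hc
      obtain ⟨⟨h1, h2⟩, h3⟩ := Aux13.forward hn hP hN hord 1 hlen hbd hnd hc'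
      refine ⟨⟨deloop ω, h1, h2⟩, ?_⟩
      exact (neg_one_pow_eq_one_iff_even (by decide : (-1:ℤˣ) ≠ 1)).mp h3
    · rintro ⟨⟨ωbar, hordU, hcyc⟩, heven⟩
      obtain ⟨ω, hordS, l', hlen', hbd', hnd', hc⟩ :=
        Aux13.reverse (L := L) hn hP hN hordU hcyc
      refine ⟨ω, hordS, l', hlen', hbd', hnd', ?_⟩
      rw [Even.neg_one_pow heven] at hc
      simpa using hc
  · constructor
    · rintro ⟨ω, hord, l, hlen, hbd, hnd, hc⟩
      have hc' : IsSignedCycle (piS ω) l (((-1:ℤˣ) : ℤ)) := by simpa using hc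
      obtain ⟨⟨h1, h2⟩, h3⟩ := Aux13.forward hn hP hN hord (-1) hlen hbd hnd hc'
      refine ⟨⟨deloop ω, h1, h2⟩, ?_⟩
      rcases Nat.even_or_odd L.card with he | ho
      · exfalso
        rw [Even.neg_one_pow he] at h3
        exact absurd h3 (by decide)
      · exact ho
    · rintro ⟨⟨ωbar, hordU, hcyc⟩, hodd⟩
      obtain ⟨ω, hordS, l', hlen', hbd', hnd', hc⟩ :=
        Aux13.reverse (L := L) hn hP hN hordU hcyc
      refine ⟨ω, hordS, l', hlen', hbd', hnd', ?_⟩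
      rw [Odd.neg_one_pow hodd] at hc
      simpa using hc
end
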